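/- arXiv:1910.12934 — 6 statements merged into one kernel-verified Lean document; each statement's English description precedes it below -/
import Mathlib

section
/- If an n×n real matrix A is tropical totally positive (A ∈ TPtrop), then there exists a unique weight matrix W ∈ Matrix (Fin n) (Fin n) ℝ whose tropical transfer matrix equals A, i.e., T(W) = A (entrywise, coercing real entries into ℝ ∪ {−∞}). -/
open Finset

/-- Truncated predecessor in `Fin n` (1-indexed entry `i-1`). -/
def fpred {n : ℕ} (j : Fin n) : Fin n :=
  ⟨j.val - 1, Nat.lt_of_le_of_lt (Nat.sub_le _ _) j.isLt⟩

/-- `ψ(W)_{i,j}` is the tropical weight of the uppermost path from source `i`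
to target `j` in the canonical planar network `G_n`. -/
def psi (n : ℕ) (W : Matrix (Fin n) (Fin n) ℝ) : Matrix (Fin n) (Fin n) ℝ :=
  fun i j => if i ≤ j then ∑ t ∈ Finset.Icc i j, W i t else ∑ t ∈ Finset.Icc j i, W t j

/-- The map `φ`, inverse of `ψ`. -/
def phi (n : ℕ) (A : Matrix (Fin n) (Fin n) ℝ) : Matrix (Fin n) (Fin n) ℝ :=
  fun i j =>
    if i = j then A i j
    else if i < j then A i j - A i (fpred j)
    else A i j - A (fpred i) j

/-- Weak trapeze inequalities. -/
def WeakTrapeze (n : ℕ) (W : Matrix (Fin n) (Fin n) ℝ) : Prop :=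
  ∀ i : Fin n, 0 < i.val →
    W i (fpred i) + W (fpred i) (fpred i) + W (fpred i) i ≤ W i i

/-- Strict trapeze inequalities. -/
def StrictTrapeze (n : ℕ) (W : Matrix (Fin n) (Fin n) ℝ) : Prop :=
  ∀ i : Fin n, 0 < i.val →
    W i (fpred i) + W (fpred i) (fpred i) + W (fpred i) i < W i i

/-- Weak parallelogram inequalities. -/
def WeakPara (n : ℕ) (W : Matrix (Fin n) (Fin n) ℝ) : Prop :=
  ∀ i j : Fin n, ∀ _h : j.val + 2 ≤ i.val,
    W i j ≤ W i ⟨j.val + 1, by have := i.isLt; omega⟩ ∧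
    W j i ≤ W ⟨j.val + 1, by have := i.isLt; omega⟩ i

/-- Strict parallelogram inequalities. -/
def StrictPara (n : ℕ) (W : Matrix (Fin n) (Fin n) ℝ) : Prop :=
  ∀ i j : Fin n, ∀ _h : j.val + 2 ≤ i.val,
    W i j < W i ⟨j.val + 1, by have := i.isLt; omega⟩ ∧
    W j i < W ⟨j.val + 1, by have := i.isLt; omega⟩ i

/-- Maximum, over the permutations of sign `ε`, of the tropical weight of the
permutation in the `k × k` matrix `B` (computed in `WithBot ℝ`, the maximum over
the empty set being `⊥ = -∞`). -/
def tropPermSup (k : ℕ) (ε : ℤˣ) (B : Matrix (Fin k) (Fin k) (WithBot ℝ)) : WithBot ℝ :=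
  (Finset.univ.filter fun σ : Equiv.Perm (Fin k) => Equiv.Perm.sign σ = ε).sup
    fun σ => ∑ i, B i (σ i)

/-- Tropical total nonnegativity of a matrix over `ℝ ∪ {-∞}`. -/
def IsTropTN (n : ℕ) (A : Matrix (Fin n) (Fin n) (WithBot ℝ)) : Prop :=
  ∀ (k : ℕ) (r c : Fin k → Fin n), StrictMono r → StrictMono c →
    tropPermSup k (-1) (A.submatrix r c) ≤ tropPermSup k 1 (A.submatrix r c)

/-- Tropical total positivity of a real matrix. -/
def IsTropTP (n : ℕ) (A : Matrix (Fin n) (Fin n) ℝ) : Prop :=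
  ∀ (k : ℕ), 2 ≤ k → ∀ (r c : Fin k → Fin n), StrictMono r → StrictMono c →
    tropPermSup k (-1) ((A.map ((↑) : ℝ → WithBot ℝ)).submatrix r c) <
      tropPermSup k 1 ((A.map ((↑) : ℝ → WithBot ℝ)).submatrix r c)

/-- Max-plus matrix product. -/
def tropMul {l m p : ℕ} (A : Matrix (Fin l) (Fin m) (WithBot ℝ))
    (B : Matrix (Fin m) (Fin p) (WithBot ℝ)) : Matrix (Fin l) (Fin p) (WithBot ℝ) :=
  fun i j => Finset.univ.sup fun k => A i k + B k j

/-- Tropical identity matrix. -/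
def tropId (n : ℕ) : Matrix (Fin n) (Fin n) (WithBot ℝ) :=
  fun i j => if i = j then 0 else ⊥

/-- Tropical elementary Jacobi matrix `x_i(s)` (0-indexed: `s` in position `(i, i+1)`). -/
def xUp (n : ℕ) (i : ℕ) (s : ℝ) : Matrix (Fin n) (Fin n) (WithBot ℝ) :=
  fun a b => if a = b then 0 else if a.val = i ∧ b.val = i + 1 then (s : WithBot ℝ) else ⊥

/-- Tropical elementary Jacobi matrix `x̄_i(s)` (0-indexed: `s` in position `(i+1, i)`). -/
def xLow (n : ℕ) (i : ℕ) (s : ℝ) : Matrix (Fin n) (Fin n) (WithBot ℝ) :=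
  fun a b => if a = b then 0 else if a.val = i + 1 ∧ b.val = i then (s : WithBot ℝ) else ⊥

/-- Tropical elementary Jacobi matrix `x∘_i(s)` (0-indexed diagonal matrix,
`s` in position `(i, i)`). -/
def xDiag (n : ℕ) (i : ℕ) (s : ℝ) : Matrix (Fin n) (Fin n) (WithBot ℝ) :=
  fun a b => if a = b then (if a.val = i then (s : WithBot ℝ) else 0) else ⊥

/-- Entry of `W` looked up with natural-number (0-based) indices. -/
def wnat (n : ℕ) (W : Matrix (Fin n) (Fin n) ℝ) (a b : ℕ) : ℝ :=
  if h : a < n ∧ b < n then W ⟨a, h.1⟩ ⟨b, h.2⟩ else 0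

/-- The left part `L(W)` of the canonical planar network:
`L(W) = ⊙_{k=1}^{n−1} ⊙_{t=1}^{k} x̄_{n−k+t−1}(W_{n−k+t, t})` (1-indexed). -/
def Lmat (n : ℕ) (W : Matrix (Fin n) (Fin n) ℝ) : Matrix (Fin n) (Fin n) (WithBot ℝ) :=
  ((List.range (n - 1)).flatMap fun k => (List.range (k + 1)).map fun t =>
      xLow n (n - k + t - 2) (wnat n W (n - k + t - 1) t)).foldl tropMul (tropId n)

/-- The diagonal part `D(W) = x∘_1(W_{1,1}) ⊙ ⋯ ⊙ x∘_n(W_{n,n})` (1-indexed). -/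
def Dmat (n : ℕ) (W : Matrix (Fin n) (Fin n) ℝ) : Matrix (Fin n) (Fin n) (WithBot ℝ) :=
  ((List.range n).map fun i => xDiag n i (wnat n W i i)).foldl tropMul (tropId n)

/-- The tropical transfer matrix of the canonical totally connected planar
network `G_n` with weight matrix `W`: `T(W) = L(W) ⊙ D(W) ⊙ (L(Wᵀ))ᵀ`. -/
def Tmat (n : ℕ) (W : Matrix (Fin n) (Fin n) ℝ) : Matrix (Fin n) (Fin n) (WithBot ℝ) :=
  tropMul (tropMul (Lmat n W) (Dmat n W)) (Matrix.transpose (Lmat n W.transpose))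

/-!
Multiplying out the elementary factors gives
`T(W)_{a,b} = max_k (L(W)_{a,k} + W_{k,k} + L(Wᵀ)_{b,k})`, where `L(W)_{a,k}` is the best
weight of a chain `W_{k+1,c_{k+1}}, …, W_{a,c_a}` with `k ≥ c_{k+1} ≥ ⋯ ≥ c_a`: these are the
paths of `G_n`. For `b ≤ a` the uppermost path, which stays in column `b`, weighs
`ψ(W)_{a,b} = ∑_{t=b}^{a} W_{t,b}`; it is the only path that uses `W_{a,b}`, and every other
path uses only weights that come before `(a, b)` in the lexicographic order of `(min, max)` of
the indices. Entries above the diagonal follow by transposition, since `T(Wᵀ) = T(W)ᵀ`.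

The `2 × 2` minors of `A` make `V = φ(A)` satisfy the strict trapeze and parallelogram
inequalities, under which the uppermost path is the unique heaviest one; hence
`T(V) = ψ(V) = A`. If also `T(W) = A`, induction along that order shows that `W` agrees with `V`
on the earlier weights, so the other paths weigh the same for `W` as for `V`, hence strictly less
than `ψ(V)_{a,b}`; therefore `ψ(W)_{a,b} = ψ(V)_{a,b}`, that is `W_{a,b} = V_{a,b}`.
-/

namespace TropicalTransfer

open scoped Matrix

lemma eq_of_sup_eq_sup_of_lt {α : Type*} [LinearOrder α] {x y r : α} (h : x ⊔ r = y ⊔ r)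
    (hr : r < y) : x = y := by
  rw [sup_eq_left.2 hr.le] at h
  rcases le_total x r with hx | hx
  · rw [sup_eq_right.2 hx] at h
    exact absurd h hr.ne
  · rwa [sup_eq_left.2 hx] at h

section Sums

variable {M : Type*} [AddCommMonoid M]

lemma sum_Ioc_eq_add_sum_Ioc (f : ℕ → M) {m r : ℕ} (h : m < r) :
    ∑ t ∈ Ioc m r, f t = f (m + 1) + ∑ t ∈ Ioc (m + 1) r, f t := by
  rw [← Icc_add_one_left_eq_Ioc, add_sum_Ioc_eq_sum_Icc h]

lemma sum_Icc_fin {n : ℕ} (f : ℕ → M) (x y : Fin n) :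
    ∑ t ∈ Icc x y, f t = ∑ t ∈ Icc (x : ℕ) y, f t := by
  rw [← Fin.map_valEmbedding_Icc, sum_map]
  rfl

lemma sum_Icc_eq_of_telescope {G : Type*} [AddCommGroup G] {f g : ℕ → G} {b a : ℕ}
    (hba : b ≤ a) (hb : g b = f b) (hg : ∀ t, b < t → t ≤ a → g t = f t - f (t - 1)) :
    ∑ t ∈ Icc b a, g t = f a := by
  induction a, hba using Nat.le_induction with
  | base => simp [hb]
  | succ a hba ih =>
    rw [sum_Icc_succ_top (by omega), ih fun t h₁ h₂ => hg t h₁ (by omega),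
      hg _ (by omega) le_rfl, Nat.add_sub_cancel, add_sub_cancel]

end Sums

section TropicalAlgebra

variable {n : ℕ}

def tropDiagonal (d : Fin n → WithBot ℝ) : Matrix (Fin n) (Fin n) (WithBot ℝ) :=
  fun i j => if i = j then d j else ⊥

lemma tropMul_tropDiagonal {m : ℕ} (P : Matrix (Fin m) (Fin n) (WithBot ℝ))
    (d : Fin n → WithBot ℝ) (i : Fin m) (j : Fin n) :
    tropMul P (tropDiagonal d) i j = P i j + d j := by
  refine le_antisymm (Finset.sup_le fun k _ => ?_) (le_trans ?_ (Finset.le_sup (mem_univ j)))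
  · by_cases hk : k = j <;> simp [tropDiagonal, hk]
  · simp [tropDiagonal]

lemma tropId_eq : tropId n = tropDiagonal 0 := rfl

lemma xDiag_eq (i : ℕ) (s : ℝ) :
    xDiag n i s = tropDiagonal fun j => if j.val = i then (s : WithBot ℝ) else 0 := by
  ext a b
  by_cases h : a = b
  · subst h; rfl
  · simp [xDiag, tropDiagonal, h]

lemma tropDiagonal_mul_tropDiagonal (d e : Fin n → WithBot ℝ) :
    tropMul (tropDiagonal d) (tropDiagonal e) = tropDiagonal (d + e) := by
  ext i j
  rw [tropMul_tropDiagonal]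
  by_cases h : i = j <;> simp [tropDiagonal, h]

lemma tropMul_xLow_apply {m : ℕ} (hm : m + 1 < n) (P : Matrix (Fin n) (Fin n) (WithBot ℝ))
    (s : ℝ) (i j : Fin n) :
    tropMul P (xLow n m s) i j =
      if j.val = m then P i j ⊔ (P i ⟨m + 1, hm⟩ + s) else P i j := by
  refine le_antisymm (Finset.sup_le fun k _ => ?_) ?_
  · by_cases hkj : k = j
    · subst hkj; split_ifs <;> simp [xLow]
    by_cases hk : k.val = m + 1 ∧ j.val = m
    · obtain rfl : k = ⟨m + 1, hm⟩ := Fin.ext hk.1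
      simp [xLow, hkj, hk.2]
    · simp [xLow, hkj, hk]
  · have hj : tropMul P (xLow n m s) i j ≥ P i j :=
      le_trans (by simp [xLow]) (Finset.le_sup (f := fun k => P i k + xLow n m s k j) (mem_univ j))
    split_ifs with hjm
    · refine sup_le hj (le_trans ?_ (Finset.le_sup (mem_univ ⟨m + 1, hm⟩)))
      have : (⟨m + 1, hm⟩ : Fin n) ≠ j := fun h => by simp [← h] at hjm
      simp [xLow, this, hjm]
    · exact hj

end TropicalAlgebra

section Inequalities

variable {n : ℕ} {W : Matrix (Fin n) (Fin n) ℝ}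

lemma wnat_apply (W : Matrix (Fin n) (Fin n) ℝ) (a b : Fin n) : wnat n W a b = W a b := by
  simp [wnat]

lemma wnat_transpose (W : Matrix (Fin n) (Fin n) ℝ) (a b : ℕ) :
    wnat n Wᵀ a b = wnat n W b a := by
  unfold wnat
  by_cases h : a < n ∧ b < n
  · rw [dif_pos h, dif_pos h.symm]; rfl
  · rw [dif_neg h, dif_neg (by tauto)]

lemma WeakPara.wnat_le_succ (hW : WeakPara n W) {r c : ℕ} (hc : c + 2 ≤ r) (hr : r < n) :
    wnat n W r c ≤ wnat n W r (c + 1) := by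
  simpa only [← wnat_apply] using (hW ⟨r, hr⟩ ⟨c, by omega⟩ hc).1

lemma WeakPara.transpose (hW : WeakPara n W) : WeakPara n Wᵀ :=
  fun i j h => (hW i j h).symm

lemma StrictPara.transpose (hW : StrictPara n W) : StrictPara n Wᵀ :=
  fun i j h => (hW i j h).symm

lemma StrictPara.weakPara (hW : StrictPara n W) : WeakPara n W :=
  fun i j h => ⟨(hW i j h).1.le, (hW i j h).2.le⟩

lemma StrictPara.wnat_lt_succ (hW : StrictPara n W) {r c : ℕ} (hc : c + 2 ≤ r) (hr : r < n) :
    wnat n W r c < wnat n W r (c + 1) := by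
  simpa only [← wnat_apply] using (hW ⟨r, hr⟩ ⟨c, by omega⟩ hc).1

lemma StrictTrapeze.transpose (hW : StrictTrapeze n W) : StrictTrapeze n Wᵀ := fun i hi => by
  have := hW i hi
  simp only [Matrix.transpose_apply]
  linarith

lemma StrictTrapeze.wnat_lt (hW : StrictTrapeze n W) {k : ℕ} (hk : k + 1 < n) :
    wnat n W (k + 1) k + wnat n W k k + wnat n W k (k + 1) < wnat n W (k + 1) (k + 1) := by
  simpa only [← wnat_apply, fpred, Nat.add_sub_cancel] using hW ⟨k + 1, hk⟩ (Nat.succ_pos k)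

end Inequalities

section LeftWeight

variable {n : ℕ} {W : Matrix (Fin n) (Fin n) ℝ}

/-- `leftWeight n W a m v` is the maximum of `∑_{t=m+1}^{a} W t (c t)` over the chains
`v ≥ c (m+1) ≥ ⋯ ≥ c a` (0-indexed): the best weight of a path of the left part of `G_n`
from source `a` up to level `m` that does not pass to the right of column `v`. -/
noncomputable def leftWeight (n : ℕ) (W : Matrix (Fin n) (Fin n) ℝ) (a m v : ℕ) : ℝ :=
  if m < a then
    (range (v + 1)).sup' nonempty_range_add_one
      fun c => wnat n W (m + 1) c + leftWeight n W a (m + 1) c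
  else 0
termination_by a - m

lemma leftWeight_of_le {a m : ℕ} (v : ℕ) (h : a ≤ m) : leftWeight n W a m v = 0 := by
  rw [leftWeight, if_neg (by omega)]

lemma leftWeight_of_lt {a m : ℕ} (v : ℕ) (h : m < a) :
    leftWeight n W a m v = (range (v + 1)).sup' nonempty_range_add_one
      fun c => wnat n W (m + 1) c + leftWeight n W a (m + 1) c := by
  rw [leftWeight, if_pos h]

lemma leftWeight_zero {a m : ℕ} (h : m < a) :
    leftWeight n W a m 0 = wnat n W (m + 1) 0 + leftWeight n W a (m + 1) 0 := by
  simp [leftWeight_of_lt 0 h]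

lemma leftWeight_succ {a m : ℕ} (v : ℕ) (h : m < a) :
    leftWeight n W a m (v + 1) =
      leftWeight n W a m v ⊔ (wnat n W (m + 1) (v + 1) + leftWeight n W a (m + 1) (v + 1)) := by
  rw [leftWeight_of_lt _ h, leftWeight_of_lt _ h, sup_comm]
  simp only [range_add_one (n := v + 1)]
  rw [sup'_insert]

lemma leftWeight_congr {W' : Matrix (Fin n) (Fin n) ℝ} {a m v : ℕ}
    (h : ∀ t c, m < t → t ≤ a → c ≤ v → wnat n W t c = wnat n W' t c) :
    leftWeight n W a m v = leftWeight n W' a m v := by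
  induction hd : a - m using Nat.strong_induction_on generalizing m v with
  | _ d ih =>
    by_cases hm : m < a
    · rw [leftWeight_of_lt _ hm, leftWeight_of_lt _ hm]
      refine sup'_congr _ rfl fun c hc => ?_
      rw [mem_range] at hc
      rw [h _ _ (by omega) hm (by omega),
        ih _ (by omega) (fun t c' ht hta _ => h t c' (by omega) hta (by omega)) rfl]
    · rw [leftWeight_of_le _ (by omega), leftWeight_of_le _ (by omega)]

lemma leftWeight_cap_zero {a m : ℕ} :
    leftWeight n W a m 0 = ∑ t ∈ Ioc m a, wnat n W t 0 := by
  induction hd : a - m using Nat.strong_induction_on generalizing m with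
  | _ d ih =>
    by_cases hm : m < a
    · rw [leftWeight_zero hm, ih _ (by omega) rfl, sum_Ioc_eq_add_sum_Ioc _ hm]
    · rw [leftWeight_of_le _ (by omega), Ioc_eq_empty (by omega), sum_empty]

lemma WeakPara.leftWeight_eq_sum (hW : WeakPara n W) {a m v : ℕ} (ha : a < n) (hv : v ≤ m) :
    leftWeight n W a m v = ∑ t ∈ Ioc m a, wnat n W t v := by
  induction hd : a - m using Nat.strong_induction_on generalizing m v with
  | _ d ih =>
    by_cases hm : m < a
    · have hterm : ∀ c ≤ v, wnat n W (m + 1) c + leftWeight n W a (m + 1) c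
          = ∑ t ∈ Ioc m a, wnat n W t c := fun c hc => by
        rw [ih _ (by omega) (by omega) rfl, sum_Ioc_eq_add_sum_Ioc _ hm]
      have hmono : MonotoneOn (fun c => ∑ t ∈ Ioc m a, wnat n W t c) (Set.Iic v) :=
        monotoneOn_of_le_succ Set.ordConnected_Iic fun c _ _ hc => sum_le_sum fun t ht => by
          rw [Set.mem_Iic, Order.succ_eq_add_one] at hc
          rw [mem_Ioc] at ht
          exact WeakPara.wnat_le_succ hW (by omega) (by omega)
      rw [leftWeight_of_lt _ hm]
      refine le_antisymm (sup'_le _ _ fun c hc => ?_) ?_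
      · rw [mem_range] at hc
        rw [hterm c (by omega)]
        exact hmono (Set.mem_Iic.2 (by omega)) Set.self_mem_Iic (by omega)
      · rw [← hterm v le_rfl]
        exact le_sup' (fun c => wnat n W (m + 1) c + leftWeight n W a (m + 1) c)
          (mem_range.2 (by omega))
    · rw [leftWeight_of_le _ (by omega), Ioc_eq_empty (by omega), sum_empty]

/-- Splitting the chains according to the last row `r` in which they use column `v + 1`. -/
lemma leftWeight_succ_eq_sup' {a m : ℕ} (v : ℕ) (hm : m ≤ a) :
    leftWeight n W a m (v + 1) = (Icc m a).sup' (nonempty_Icc.2 hm)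
      fun r => ∑ t ∈ Ioc m r, wnat n W t (v + 1) + leftWeight n W a r v := by
  induction hd : a - m using Nat.strong_induction_on generalizing m with
  | _ d ih =>
    rcases hm.lt_or_eq with hm | rfl
    · set f := fun r => ∑ t ∈ Ioc m r, wnat n W t (v + 1) + leftWeight n W a r v
      calc leftWeight n W a m (v + 1)
          = f m ⊔ (Icc (m + 1) a).sup' (nonempty_Icc.2 hm) f := by
            rw [leftWeight_succ _ hm, ih _ (by omega) hm rfl, add_sup']
            refine congrArg₂ _ (by simp [f]) (sup'_congr _ rfl fun r hr => ?_)
            rw [mem_Icc] at hr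
            simp only [f, sum_Ioc_eq_add_sum_Ioc _ (show m < r by omega), add_assoc]
        _ = (Icc m a).sup' (nonempty_Icc.2 hm.le) f := by
            rw [← sup'_insert]
            simp only [insert_Icc_add_one_left_eq_Icc hm.le]
    · simp [leftWeight_of_le _ le_rfl]

end LeftWeight

section ClosedForm

variable {n : ℕ} {W : Matrix (Fin n) (Fin n) ℝ}

/-- The partial products of the factors of `L(W)` have this shape: column `j` holds the best
chains with cap `κ j`, or nothing below the diagonal while `κ j < 0`. -/
noncomputable def chainMatrix (n : ℕ) (W : Matrix (Fin n) (Fin n) ℝ) (κ : ℕ → ℤ) :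
    Matrix (Fin n) (Fin n) (WithBot ℝ) := fun i j =>
  if i = j then 0
  else if j.val < i.val ∧ 0 ≤ κ j then (leftWeight n W i j (κ j).toNat : WithBot ℝ) else ⊥

lemma chainMatrix_congr {κ κ' : ℕ → ℤ}
    (h : ∀ j, j + 1 < n → max (κ j) (-1) = max (κ' j) (-1)) :
    chainMatrix n W κ = chainMatrix n W κ' := by
  ext i j
  by_cases hji : j.val < i.val
  · have := h j (by omega)
    by_cases h0 : 0 ≤ κ j
    · have h0' : 0 ≤ κ' j := by omega
      have hκ : (κ j).toNat = (κ' j).toNat := by omega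
      simp [chainMatrix, h0, h0', hκ]
    · have h0' : ¬ 0 ≤ κ' j := by omega
      simp [chainMatrix, h0, h0']
  · simp [chainMatrix, hji]

lemma chainMatrix_mul_xLow {κ : ℕ → ℤ} {m t : ℕ} (hm : m + 1 < n) (hκm : κ m + 1 = t)
    (hκm' : κ (m + 1) = t) :
    tropMul (chainMatrix n W κ) (xLow n m (wnat n W (m + 1) t)) =
      chainMatrix n W (Function.update κ m t) := by
  ext i j
  rw [tropMul_xLow_apply hm]
  split_ifs with hj
  · rw [show j = ⟨m, by omega⟩ from Fin.ext hj]
    rcases lt_trichotomy i.val m with hi | hi | hi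
    · simp [chainMatrix, Fin.ext_iff, show i.val ≠ m by omega, show i.val ≠ m + 1 by omega,
        show ¬ m < i.val by omega, show ¬ m + 1 < i.val by omega]
    · rw [show i = ⟨m, by omega⟩ from Fin.ext hi]
      simp [chainMatrix]
    · have hbelow :
          chainMatrix n W κ i ⟨m + 1, hm⟩ = (leftWeight n W i (m + 1) t : WithBot ℝ) := by
        by_cases hi' : m + 1 < i.val
        · simp [chainMatrix, Fin.ext_iff, show i.val ≠ m + 1 by omega, hi', hκm']
        · rw [show i = ⟨m + 1, hm⟩ from Fin.ext (by simp; omega)]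
          simp [chainMatrix, leftWeight_of_le _ le_rfl]
      have hne : i ≠ ⟨m, by omega⟩ := Fin.ne_of_val_ne (by simp; omega)
      rw [hbelow]
      obtain _ | u := t
      · simp [chainMatrix, hne, hi, show ¬ 0 ≤ κ m by omega, leftWeight_zero hi, add_comm]
      · have hu : (κ m).toNat = u := by omega
        simp only [chainMatrix, hne, if_false, hi, Function.update_self, true_and,
          show 0 ≤ κ m by omega, hu, Nat.cast_nonneg, if_true, Int.toNat_natCast,
          leftWeight_succ _ hi]
        push_cast
        rw [add_comm]
  · simp [chainMatrix, Function.update_of_ne hj]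

/-- The cap of column `j` after the blocks `k < K` of factors of `L(W)` and the first `T` factors
of block `K`; it is negative for the columns not reached yet. -/
def blockCap (n K T j : ℕ) : ℤ := j + K + 1 - n + if j + K + 2 < n + T then 1 else 0

lemma foldl_block (W : Matrix (Fin n) (Fin n) ℝ) {K T : ℕ} (hK : K + 2 ≤ n)
    (hT : T ≤ K + 1) :
    ((List.range T).map fun t => xLow n (n - K + t - 2) (wnat n W (n - K + t - 1) t)).foldl
      tropMul (chainMatrix n W (blockCap n K 0)) = chainMatrix n W (blockCap n K T) := by
  induction T with
  | zero => rfl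
  | succ T ih =>
    rw [List.range_succ, List.map_append, List.foldl_append, ih (by omega)]
    simp only [List.map_cons, List.map_nil, List.foldl_cons, List.foldl_nil]
    rw [show n - K + T - 1 = n - K + T - 2 + 1 by omega,
      chainMatrix_mul_xLow (by omega) (by simp only [blockCap]; split_ifs <;> omega)
        (by simp only [blockCap]; split_ifs <;> omega)]
    congr 1
    funext j
    by_cases hj : j = n - K + T - 2
    · subst hj; simp only [Function.update_self, blockCap]; split_ifs <;> omega
    · simp only [Function.update_of_ne hj, blockCap]; split_ifs <;> omega

lemma Lmat_eq_chainMatrix (W : Matrix (Fin n) (Fin n) ℝ) :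
    Lmat n W = chainMatrix n W fun j => j := by
  have hblocks : ∀ K ≤ n - 1,
      ((List.range K).flatMap fun k => (List.range (k + 1)).map fun t =>
        xLow n (n - k + t - 2) (wnat n W (n - k + t - 1) t)).foldl tropMul (tropId n)
        = chainMatrix n W (blockCap n K 0) := by
    intro K
    induction K with
    | zero =>
      intro _
      ext i j
      by_cases hij : i = j
      · simp [tropId, chainMatrix, hij]
      · have hneg : j < i → blockCap n 0 0 j < 0 := fun h => by
          have := i.isLt
          simp only [blockCap]; split_ifs <;> omega
        simpa [tropId, chainMatrix, hij] using hneg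
    | succ K ih =>
      intro hK
      rw [List.range_succ, List.flatMap_append, List.foldl_append, ih (by omega)]
      simp only [List.flatMap_cons, List.flatMap_nil, List.append_nil]
      rw [foldl_block W (by omega) le_rfl]
      exact chainMatrix_congr fun j hj => by simp only [blockCap]; split_ifs <;> omega
  rw [Lmat, hblocks _ le_rfl]
  exact chainMatrix_congr fun j hj => by simp only [blockCap]; split_ifs <;> omega

lemma Lmat_apply (W : Matrix (Fin n) (Fin n) ℝ) (a k : Fin n) :
    Lmat n W a k = if k ≤ a then (leftWeight n W a k k : WithBot ℝ) else ⊥ := by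
  rw [Lmat_eq_chainMatrix]
  by_cases hak : a = k
  · subst hak; simp [chainMatrix, leftWeight_of_le _ le_rfl]
  · have : k ≤ a ↔ k.val < a.val := ⟨fun h => by omega, fun h => by omega⟩
    simp [chainMatrix, hak, this]

lemma Dmat_eq_tropDiagonal (W : Matrix (Fin n) (Fin n) ℝ) :
    Dmat n W = tropDiagonal fun j => (W j j : WithBot ℝ) := by
  have hprefix : ∀ T ≤ n, ((List.range T).map fun i => xDiag n i (wnat n W i i)).foldl
      tropMul (tropId n) =
        tropDiagonal fun j => if j.val < T then (W j j : WithBot ℝ) else 0 := by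
    intro T
    induction T with
    | zero => intro _; simp [tropId_eq]; rfl
    | succ T ih =>
      intro hT
      rw [List.range_succ, List.map_append, List.foldl_append, ih (by omega)]
      simp only [List.map_cons, List.map_nil, List.foldl_cons, List.foldl_nil]
      rw [xDiag_eq, tropDiagonal_mul_tropDiagonal]
      congr 1
      funext j
      by_cases hj : j.val = T
      · simp [hj, ← wnat_apply]
      · by_cases hjT : j.val < T
        · simp [hj, hjT, show j.val < T + 1 by omega]
        · simp [hj, hjT, show ¬ j.val < T + 1 by omega]
  rw [Dmat, hprefix n le_rfl]
  simp

/-- The weight of the best path of `G_n` from source `a` to sink `b` through the middle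
vertex `k`. -/
noncomputable def pathWeight (n : ℕ) (W : Matrix (Fin n) (Fin n) ℝ) (a b k : ℕ) : ℝ :=
  leftWeight n W a k k + wnat n W k k + leftWeight n Wᵀ b k k

lemma Tmat_apply (W : Matrix (Fin n) (Fin n) ℝ) (a b : Fin n) :
    Tmat n W a b =
      (range (min (a : ℕ) b + 1)).sup fun k => (pathWeight n W a b k : WithBot ℝ) := by
  have hterm : ∀ k : Fin n, tropMul (Lmat n W) (Dmat n W) a k + (Lmat n Wᵀ)ᵀ k b =
      if k ≤ a ∧ k ≤ b then (pathWeight n W a b k : WithBot ℝ) else ⊥ := fun k => by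
    rw [Dmat_eq_tropDiagonal, tropMul_tropDiagonal, Matrix.transpose_apply, Lmat_apply,
      Lmat_apply]
    by_cases ha : k ≤ a <;> by_cases hb : k ≤ b <;> simp [ha, hb, pathWeight, wnat_apply]
  change univ.sup (fun k => tropMul (Lmat n W) (Dmat n W) a k + (Lmat n Wᵀ)ᵀ k b) = _
  simp only [hterm]
  refine le_antisymm (Finset.sup_le fun k _ => ?_) (Finset.sup_le fun k hk => ?_)
  · split_ifs with h
    · exact Finset.le_sup (f := fun k => (pathWeight n W a b k : WithBot ℝ))
        (mem_range.2 (by rw [Fin.le_iff_val_le_val, Fin.le_iff_val_le_val] at h; omega))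
    · exact bot_le
  · rw [mem_range] at hk
    have hkn : k < n := by have := a.isLt; omega
    refine le_trans ?_ (Finset.le_sup (mem_univ ⟨k, hkn⟩))
    rw [if_pos (by simp only [Fin.le_iff_val_le_val]; omega)]

end ClosedForm

section Transfer

variable {n : ℕ} {W V : Matrix (Fin n) (Fin n) ℝ}

lemma psi_apply_of_le (W : Matrix (Fin n) (Fin n) ℝ) {a b : Fin n} (hba : b ≤ a) :
    psi n W a b = ∑ t ∈ Icc (b : ℕ) a, wnat n W t b := by
  unfold psi
  split_ifs with hab
  · obtain rfl := le_antisymm hab hba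
    simp [wnat_apply]
  · simp only [← wnat_apply, sum_Icc_fin (fun t => wnat n W t b)]

lemma psi_transpose_apply (W : Matrix (Fin n) (Fin n) ℝ) (a b : Fin n) :
    psi n Wᵀ a b = psi n W b a := by
  rcases le_total b a with hba | hab
  · rw [psi_apply_of_le _ hba]
    unfold psi
    rcases hba.lt_or_eq with hba | rfl
    · simp only [if_pos hba.le, ← wnat_apply,
        sum_Icc_fin (fun t => wnat n W b t), wnat_transpose]
    · simp [wnat_apply]
  · rw [psi_apply_of_le _ hab]
    unfold psi
    rcases hab.lt_or_eq with hab | rfl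
    · simp only [if_pos hab.le, ← wnat_apply,
        sum_Icc_fin (fun t => wnat n W t a), wnat_transpose]
    · simp [wnat_apply]

lemma pathWeight_transpose (W : Matrix (Fin n) (Fin n) ℝ) (a b k : ℕ) :
    pathWeight n Wᵀ a b k = pathWeight n W b a k := by
  simp only [pathWeight, Matrix.transpose_transpose, wnat_transpose]
  ring

lemma Tmat_transpose_apply (W : Matrix (Fin n) (Fin n) ℝ) (a b : Fin n) :
    Tmat n Wᵀ a b = Tmat n W b a := by
  simp only [Tmat_apply, pathWeight_transpose, min_comm (a : ℕ)]

lemma WeakPara.pathWeight_eq (hW : WeakPara n W) {a b : ℕ} (ha : a < n) (hb : b < n) (k : ℕ) :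
    pathWeight n W a b k =
      ∑ t ∈ Ioc k a, wnat n W t k + wnat n W k k + ∑ t ∈ Ioc k b, wnat n W k t := by
  simp only [pathWeight, WeakPara.leftWeight_eq_sum hW ha le_rfl,
    WeakPara.leftWeight_eq_sum (WeakPara.transpose hW) hb le_rfl, wnat_transpose]

lemma WeakPara.pathWeight_eq_psi (hW : WeakPara n W) {a b : Fin n} (hba : b ≤ a) :
    pathWeight n W a b b = psi n W a b := by
  rw [WeakPara.pathWeight_eq hW a.isLt b.isLt, Ioc_self, sum_empty, add_zero, psi_apply_of_le _ hba,
    ← add_sum_Ioc_eq_sum_Icc (Fin.le_iff_val_le_val.1 hba), add_comm]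

lemma pathWeight_lt_succ (hP : StrictPara n W) (hT : StrictTrapeze n W) {a b k : ℕ}
    (ha : a < n) (hb : b < n) (hka : k < a) (hkb : k < b) :
    pathWeight n W a b k < pathWeight n W a b (k + 1) := by
  simp only [WeakPara.pathWeight_eq (StrictPara.weakPara hP) ha hb, sum_Ioc_eq_add_sum_Ioc _ hka,
    sum_Ioc_eq_add_sum_Ioc _ hkb]
  have hcol :
      ∑ t ∈ Ioc (k + 1) a, wnat n W t k ≤ ∑ t ∈ Ioc (k + 1) a, wnat n W t (k + 1) :=
    sum_le_sum fun t ht => by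
      rw [mem_Ioc] at ht
      exact (StrictPara.wnat_lt_succ hP (by omega) (by omega)).le
  have hrow :
      ∑ t ∈ Ioc (k + 1) b, wnat n W k t ≤ ∑ t ∈ Ioc (k + 1) b, wnat n W (k + 1) t :=
    sum_le_sum fun t ht => by
      rw [mem_Ioc] at ht
      simpa only [wnat_transpose] using
        (StrictPara.wnat_lt_succ (StrictPara.transpose hP) (by omega) (by omega)).le
  linarith [StrictTrapeze.wnat_lt hT (show k + 1 < n by omega)]

/-- The part of `T(W)_{a,b}`, `b ≤ a`, not coming from the uppermost path: the paths through a
middle vertex `k < b`, and those through `b` that leave column `b` at some row `r < a`. -/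
noncomputable def transferRest (n : ℕ) (W : Matrix (Fin n) (Fin n) ℝ) (a : ℕ) :
    ℕ → WithBot ℝ
  | 0 => ⊥
  | v + 1 =>
    (range (v + 1)).sup (fun k => (pathWeight n W a (v + 1) k : WithBot ℝ)) ⊔
      (Ico (v + 1) a).sup fun r => ((∑ t ∈ Ioc (v + 1) r, wnat n W t (v + 1)) +
        leftWeight n W a r v + wnat n W (v + 1) (v + 1) : ℝ)

lemma Tmat_apply_of_le (W : Matrix (Fin n) (Fin n) ℝ) {a b : Fin n} (hba : b ≤ a) :
    Tmat n W a b = (psi n W a b : WithBot ℝ) ⊔ transferRest n W a b := by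
  rw [Tmat_apply, min_eq_right (by exact hba), psi_apply_of_le _ hba,
    ← add_sum_Ioc_eq_sum_Icc (Fin.le_iff_val_le_val.1 hba)]
  obtain ⟨_ | v, hb⟩ := b
  · simp [transferRest, pathWeight, leftWeight_cap_zero, leftWeight_of_le, add_comm]
  · have hva : v + 1 ≤ a := hba
    simp only [transferRest, range_add_one (n := v + 1), sup_insert]
    rw [pathWeight, leftWeight_of_le (a := v + 1) _ le_rfl, add_zero,
      leftWeight_succ_eq_sup' _ hva, sup'_add, coe_sup', ← Ico_insert_right hva, sup_insert]
    simp only [Function.comp_def, leftWeight_of_le _ le_rfl, add_zero,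
      add_comm (wnat n W (v + 1) (v + 1))]
    ac_rfl

lemma transferRest_lt_psi (hP : StrictPara n W) (hT : StrictTrapeze n W) {a b : Fin n}
    (hba : b ≤ a) : transferRest n W a b < psi n W a b := by
  obtain ⟨_ | v, hb⟩ := b
  · exact WithBot.bot_lt_coe _
  have hva : v + 1 ≤ a := hba
  have hpsi := WeakPara.pathWeight_eq_psi (StrictPara.weakPara hP) hba
  simp only [transferRest, sup_lt_iff]
  refine ⟨(Finset.sup_lt_iff (WithBot.bot_lt_coe _)).2 fun k hk => ?_,
    (Finset.sup_lt_iff (WithBot.bot_lt_coe _)).2 fun r hr => ?_⟩ <;>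
    rw [WithBot.coe_lt_coe]
  · rw [mem_range] at hk
    rw [← hpsi]
    refine strictMonoOn_Iic_of_lt_succ (fun m hm => ?_) (Set.mem_Iic.2 hk.le) Set.self_mem_Iic hk
    exact pathWeight_lt_succ hP hT a.isLt hb (by omega) hm
  · rw [mem_Ico] at hr
    rw [psi_apply_of_le _ hba, ← add_sum_Ioc_eq_sum_Icc hva,
      ← sum_Ioc_consecutive _ hr.1 hr.2.le,
      WeakPara.leftWeight_eq_sum (StrictPara.weakPara hP) a.isLt (by omega)]
    have hlower : ∑ t ∈ Ioc r a, wnat n W t v < ∑ t ∈ Ioc r a, wnat n W t (v + 1) :=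
      sum_lt_sum_of_nonempty (nonempty_Ioc.2 hr.2) fun t ht => by
        rw [mem_Ioc] at ht
        exact StrictPara.wnat_lt_succ hP (by omega) (by omega)
    linarith

lemma pathWeight_congr {a b k : ℕ} (h : ∀ t c, min t c ≤ k → wnat n W t c = wnat n V t c) :
    pathWeight n W a b k = pathWeight n V a b k := by
  unfold pathWeight
  rw [leftWeight_congr (W := W) (W' := V) fun t c _ _ hc => h t c (by omega), h k k (by omega),
    leftWeight_congr (W := Wᵀ) (W' := Vᵀ) fun t c _ _ hc => by
      rw [wnat_transpose, wnat_transpose, h c t (by omega)]]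

lemma transferRest_congr {a b : ℕ}
    (h : ∀ t c, toLex (min t c, max t c) < toLex (b, a) → wnat n W t c = wnat n V t c) :
    transferRest n W a b = transferRest n V a b := by
  simp only [Prod.Lex.toLex_lt_toLex] at h
  obtain _ | v := b
  · rfl
  simp only [transferRest]
  congr 1
  · refine sup_congr rfl fun k hk => ?_
    rw [mem_range] at hk
    rw [pathWeight_congr fun t c htc => h t c (by omega)]
  · refine sup_congr rfl fun r hr => ?_
    rw [mem_Ico] at hr
    rw [sum_congr rfl fun t ht => h t (v + 1) (by rw [mem_Ioc] at ht; omega),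
      leftWeight_congr fun t c _ _ hc => h t c (by omega), h (v + 1) (v + 1) (by omega)]

end Transfer

section Uniqueness

variable {n : ℕ} {W V : Matrix (Fin n) (Fin n) ℝ}

lemma Tmat_apply_eq_psi_of_le (hP : StrictPara n V) (hT : StrictTrapeze n V) {a b : Fin n}
    (hba : b ≤ a) : Tmat n V a b = psi n V a b := by
  rw [Tmat_apply_of_le _ hba, sup_eq_left.2 (transferRest_lt_psi hP hT hba).le]

lemma Tmat_eq_psi (hP : StrictPara n V) (hT : StrictTrapeze n V) :
    Tmat n V = (psi n V).map (↑) := by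
  ext a b
  rcases le_total b a with hba | hab
  · exact Tmat_apply_eq_psi_of_le hP hT hba
  · rw [← Tmat_transpose_apply, Tmat_apply_eq_psi_of_le (StrictPara.transpose hP)
      (StrictTrapeze.transpose hT) hab, psi_transpose_apply, Matrix.map_apply]

lemma apply_eq_of_Tmat_apply_eq (hP : StrictPara n V) (hT : StrictTrapeze n V) {a b : Fin n}
    (hba : b ≤ a)
    (h : ∀ t c, toLex (min t c, max t c) < toLex ((b : ℕ), (a : ℕ)) →
      wnat n W t c = wnat n V t c)
    (hTab : Tmat n W a b = Tmat n V a b) : W a b = V a b := by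
  rw [Tmat_apply_of_le _ hba, Tmat_apply_of_le _ hba, transferRest_congr h] at hTab
  have hpsi := WithBot.coe_injective (eq_of_sup_eq_sup_of_lt hTab (transferRest_lt_psi hP hT hba))
  have hba' : (b : ℕ) ≤ a := hba
  rw [psi_apply_of_le _ hba, psi_apply_of_le _ hba, ← Ico_add_one_right_eq_Icc,
    sum_Ico_succ_top hba', sum_Ico_succ_top hba', sum_congr rfl fun t ht => h t b ?_] at hpsi
  · simpa [wnat_apply] using hpsi
  · rw [mem_Ico] at ht
    rw [Prod.Lex.toLex_lt_toLex]
    omega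

lemma eq_of_Tmat_eq (hP : StrictPara n V) (hT : StrictTrapeze n V) (h : Tmat n W = Tmat n V) :
    W = V := by
  suffices key : ∀ p : ℕ ×ₗ ℕ, ∀ t c, toLex (min t c, max t c) = p →
      wnat n W t c = wnat n V t c by
    ext i j
    simpa [wnat_apply] using key _ i j rfl
  intro p
  induction p using WellFoundedLT.induction with
  | _ p ih =>
    rintro t c rfl
    have hbefore : ∀ t' c', toLex (min t' c', max t' c') < toLex (min t c, max t c) →
        wnat n W t' c' = wnat n V t' c' := fun t' c' hlt => ih _ hlt t' c' rfl
    by_cases htc : t < n ∧ c < n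
    swap
    · simp [wnat, htc]
    simp only [wnat, dif_pos htc]
    rcases le_total c t with hct | htc'
    · rw [min_eq_right hct, max_eq_left hct] at hbefore
      exact apply_eq_of_Tmat_apply_eq (a := ⟨t, htc.1⟩) (b := ⟨c, htc.2⟩)
        hP hT hct hbefore (congrFun₂ h _ _)
    · rw [min_eq_left htc', max_eq_right htc'] at hbefore
      exact apply_eq_of_Tmat_apply_eq (W := Wᵀ) (a := ⟨c, htc.2⟩) (b := ⟨t, htc.1⟩)
        (StrictPara.transpose hP) (StrictTrapeze.transpose hT) htc'
        (fun t' c' hlt => by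
          rw [wnat_transpose, wnat_transpose, hbefore c' t' (by rwa [min_comm, max_comm])])
        (by rw [Tmat_transpose_apply, Tmat_transpose_apply, h])

end Uniqueness

section Phi

variable {n : ℕ} {A : Matrix (Fin n) (Fin n) ℝ}

lemma IsTropTP.antidiag_lt_diag (hA : IsTropTP n A) {r₀ r₁ c₀ c₁ : Fin n} (hr : r₀ < r₁)
    (hc : c₀ < c₁) : A r₀ c₁ + A r₁ c₀ < A r₀ c₀ + A r₁ c₁ := by
  have h := hA 2 le_rfl ![r₀, r₁] ![c₀, c₁] (by simpa using hr) (by simpa using hc)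
  have hodd : univ.filter (fun σ : Equiv.Perm (Fin 2) => Equiv.Perm.sign σ = -1) =
      {Equiv.swap 0 1} := by decide
  have heven : univ.filter (fun σ : Equiv.Perm (Fin 2) => Equiv.Perm.sign σ = 1) = {1} := by
    decide
  simp only [tropPermSup, hodd, heven, sup_singleton, Fin.sum_univ_two, Matrix.submatrix_apply,
    Matrix.map_apply, Equiv.swap_apply_left, Equiv.swap_apply_right, Equiv.Perm.one_apply,
    Matrix.cons_val_zero, Matrix.cons_val_one] at h
  exact_mod_cast h

lemma phi_apply_self (A : Matrix (Fin n) (Fin n) ℝ) (i : Fin n) : phi n A i i = A i i := by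
  simp [phi]

lemma phi_apply_of_lt (A : Matrix (Fin n) (Fin n) ℝ) {i j : Fin n} (h : i < j) :
    phi n A i j = A i j - A i (fpred j) := by
  simp [phi, h, h.ne]

lemma phi_apply_of_gt (A : Matrix (Fin n) (Fin n) ℝ) {i j : Fin n} (h : j < i) :
    phi n A i j = A i j - A (fpred i) j := by
  simp [phi, h.ne', not_lt.2 h.le]

lemma fpred_lt {i : Fin n} (hi : 0 < i.val) : fpred i < i :=
  Fin.lt_def.2 (show i.val - 1 < i.val by omega)

lemma phi_transpose (A : Matrix (Fin n) (Fin n) ℝ) : phi n Aᵀ = (phi n A)ᵀ := by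
  ext i j
  rcases lt_trichotomy i j with h | rfl | h
  · rw [Matrix.transpose_apply, phi_apply_of_lt _ h, phi_apply_of_gt _ h]; rfl
  · simp [phi_apply_self]
  · rw [Matrix.transpose_apply, phi_apply_of_gt _ h, phi_apply_of_lt _ h]; rfl

lemma strictPara_phi (hA : IsTropTP n A) : StrictPara n (phi n A) := by
  intro i j hij
  have hi : fpred i < i := fpred_lt (by omega)
  have hj : j < ⟨j.val + 1, by omega⟩ := Fin.lt_def.2 (Nat.lt_succ_self _)
  have hji : j < i := Fin.lt_def.2 (by omega)
  have hj'i : (⟨j.val + 1, by omega⟩ : Fin n) < i := Fin.lt_def.2 (by simp; omega)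
  rw [phi_apply_of_gt _ hji, phi_apply_of_gt _ hj'i, phi_apply_of_lt _ hji,
    phi_apply_of_lt _ hj'i]
  constructor
  · linarith [IsTropTP.antidiag_lt_diag hA hi hj]
  · linarith [IsTropTP.antidiag_lt_diag hA hj hi]

lemma strictTrapeze_phi (hA : IsTropTP n A) : StrictTrapeze n (phi n A) := by
  intro i hi
  have hpi := fpred_lt hi
  rw [phi_apply_of_gt _ hpi, phi_apply_self, phi_apply_of_lt _ hpi, phi_apply_self]
  linarith [IsTropTP.antidiag_lt_diag hA hpi hpi]

lemma psi_phi_apply_of_le (A : Matrix (Fin n) (Fin n) ℝ) {a b : Fin n} (hba : b ≤ a) :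
    psi n (phi n A) a b = A a b := by
  rw [psi_apply_of_le _ hba, ← wnat_apply A]
  refine sum_Icc_eq_of_telescope (f := fun t => wnat n A t b) hba
    (by simp only [wnat_apply, phi_apply_self]) fun t hbt hta => ?_
  have ht : t < n := by omega
  have hbt' : b < ⟨t, ht⟩ := Fin.lt_def.2 hbt
  simp only [wnat, dif_pos (And.intro ht b.isLt), dif_pos (And.intro (by omega : t - 1 < n) b.isLt),
    phi_apply_of_gt _ hbt']
  rfl

lemma psi_phi (A : Matrix (Fin n) (Fin n) ℝ) : psi n (phi n A) = A := by
  ext a b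
  rcases le_total b a with hba | hab
  · exact psi_phi_apply_of_le A hba
  · rw [← Matrix.transpose_transpose (phi n A), psi_transpose_apply, ← phi_transpose,
      psi_phi_apply_of_le _ hab, Matrix.transpose_apply]

end Phi

end TropicalTransfer


/-- a tropical totally positive matrix is the tropical transfer
matrix of the canonical planar network for a unique real weight matrix. -/
theorem TP_unique_weights (n : ℕ) (A : Matrix (Fin n) (Fin n) ℝ)
    (hA : IsTropTP n A) :
    ∃! W : Matrix (Fin n) (Fin n) ℝ, Tmat n W = A.map ((↑) : ℝ → WithBot ℝ) := by
  have hP := TropicalTransfer.strictPara_phi hA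
  have hT := TropicalTransfer.strictTrapeze_phi hA
  have hphi : Tmat n (phi n A) = A.map (↑) := by
    rw [TropicalTransfer.Tmat_eq_psi hP hT, TropicalTransfer.psi_phi]
  exact ⟨phi n A, hphi, fun W hW => TropicalTransfer.eq_of_Tmat_eq hP hT (hW.trans hphi.symm)⟩
end

section
/- If an n×n real matrix A is tropical totally positive (A ∈ TPtrop) and W ∈ Matrix (Fin n) (Fin n) ℝ is any weight matrix with T(W) = A, then W satisfies the strict trapeze inequalities and the strict parallelogram inequalities. -/
open Finset

/-!
Regrouping the factors of `L(W)` by subdiagonals gives `L(W) = B_{n-1} ⊙ ⋯ ⊙ B_1`, where the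
bidiagonal factor `B_d` carries the weights `W_{r,r-d}`. So `L(W)_{ij}` is the best weight of a
path from row `i` down to row `j` whose column index never decreases on the way, and for `j ≤ i`
  `ψ(W)_{ij} ≤ T(W)_{ij} ≤ max (ψ(W)_{ij}, max_{c<j} W_{ic} + T(W)_{i-1,j})`
(the path staying in column `j`, resp. the first step of an arbitrary path). If `A = T(W)` has
positive tropical `2 × 2` minors, the minor on rows `i-1, i` and columns `c < j` excludes the
second alternative, by induction on `i`. Hence `A = ψ(W)` on and below the diagonal, and by
transposition above it; the trapeze and parallelogram inequalities are the `2 × 2` minors on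
consecutive rows and columns, rewritten through `A_{ij} = A_{i-1,j} + W_{ij}`.
-/

open Finset

section SupAdd

variable {α ι : Type*} [LinearOrder α] [Add α]

lemma WithBot.finset_sup_add [AddRightMono α] (s : Finset ι) (f : ι → WithBot α)
    (a : WithBot α) : s.sup f + a = s.sup fun i => f i + a :=
  apply_sup_eq_sup_comp (· + a) (fun x y => (max_add_add_right x y a).symm) (WithBot.bot_add a)

lemma WithBot.add_finset_sup [AddLeftMono α] (s : Finset ι) (f : ι → WithBot α)
    (a : WithBot α) : a + s.sup f = s.sup fun i => a + f i :=
  apply_sup_eq_sup_comp (a + ·) (fun x y => (max_add_add_left a x y).symm) (WithBot.add_bot a)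

end SupAdd

section TropicalProduct

variable {k l m p : ℕ}

lemma tropMul_apply (A : Matrix (Fin l) (Fin m) (WithBot ℝ))
    (B : Matrix (Fin m) (Fin p) (WithBot ℝ)) (i : Fin l) (j : Fin p) :
    tropMul A B i j = univ.sup fun k => A i k + B k j := rfl

lemma le_tropMul (A : Matrix (Fin l) (Fin m) (WithBot ℝ))
    (B : Matrix (Fin m) (Fin p) (WithBot ℝ)) (i : Fin l) (j : Fin p) (k : Fin m) :
    A i k + B k j ≤ tropMul A B i j :=
  le_sup (f := fun k => A i k + B k j) (mem_univ k)

lemma tropMul_assoc (A : Matrix (Fin k) (Fin l) (WithBot ℝ))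
    (B : Matrix (Fin l) (Fin m) (WithBot ℝ)) (C : Matrix (Fin m) (Fin p) (WithBot ℝ)) :
    tropMul (tropMul A B) C = tropMul A (tropMul B C) := by
  ext i j
  simp only [tropMul, WithBot.finset_sup_add, WithBot.add_finset_sup, add_assoc]
  exact Finset.sup_comm _ _ _

end TropicalProduct

def tropDiag {n : ℕ} (w : Fin n → WithBot ℝ) : Matrix (Fin n) (Fin n) (WithBot ℝ) :=
  fun i j => if i = j then w j else ⊥

section TropicalDiagonal

variable {n : ℕ} (M : Matrix (Fin n) (Fin n) (WithBot ℝ)) (w : Fin n → WithBot ℝ)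

lemma tropMul_tropDiag_apply (i j : Fin n) : tropMul M (tropDiag w) i j = M i j + w j := by
  simp [tropMul, tropDiag, add_ite, Finset.sup_ite, Finset.filter_eq']

lemma tropDiag_tropMul_apply (i j : Fin n) : tropMul (tropDiag w) M i j = w i + M i j := by
  simp [tropMul, tropDiag, ite_add, Finset.sup_ite, Finset.filter_eq]

lemma tropId_eq_tropDiag : tropId n = tropDiag 0 := rfl

lemma tropMul_tropId : tropMul M (tropId n) = M := by
  ext i j
  simp [tropId_eq_tropDiag, tropMul_tropDiag_apply]

lemma tropId_tropMul : tropMul (tropId n) M = M := by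
  ext i j
  simp [tropId_eq_tropDiag, tropDiag_tropMul_apply]

lemma xDiag_eq_tropDiag (a : ℕ) (s : ℝ) :
    xDiag n a s = tropDiag fun j => if j.val = a then (s : WithBot ℝ) else 0 := by
  ext i j
  simp only [xDiag, tropDiag]
  split_ifs <;> simp_all

lemma tropDiag_tropMul_tropDiag (w' : Fin n → WithBot ℝ) :
    tropMul (tropDiag w) (tropDiag w') = tropDiag (w + w') := by
  ext i j
  rw [tropMul_tropDiag_apply]
  by_cases h : i = j <;> simp [tropDiag, h]

end TropicalDiagonal

section Folds

variable {n : ℕ}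

lemma foldl_tropMul (M : Matrix (Fin n) (Fin n) (WithBot ℝ))
    (l : List (Matrix (Fin n) (Fin n) (WithBot ℝ))) :
    l.foldl tropMul M = tropMul M (l.foldr tropMul (tropId n)) := by
  induction l generalizing M with
  | nil => simp [tropMul_tropId]
  | cons x l ih => simp [ih, tropMul_assoc]

lemma foldl_tropMul_tropId (l : List (Matrix (Fin n) (Fin n) (WithBot ℝ))) :
    l.foldl tropMul (tropId n) = l.foldr tropMul (tropId n) := by
  rw [foldl_tropMul, tropId_tropMul]

end Folds

lemma fpred_val {n : ℕ} (i : Fin n) : (fpred i).val = i.val - 1 := rfl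

lemma wnat_val {n : ℕ} (W : Matrix (Fin n) (Fin n) ℝ) (i j : Fin n) : wnat n W i j = W i j := by
  rw [wnat, dif_pos ⟨i.isLt, j.isLt⟩]

lemma sum_Ioc_eq_sum_Ioc_fpred_add {M : Type*} [AddCommMonoid M] (f : ℕ → M) {a n : ℕ}
    {i : Fin n} (h : a < i.val) :
    ∑ s ∈ Ioc a i, f s = ∑ s ∈ Ioc a (fpred i), f s + f i := by
  obtain ⟨m, hm⟩ : ∃ m, i.val = m + 1 := ⟨i.val - 1, by omega⟩
  rw [hm, fpred_val, hm, Nat.add_sub_cancel, Finset.sum_Ioc_succ_top (by omega)]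

section Psi

variable {n : ℕ} (W : Matrix (Fin n) (Fin n) ℝ)

lemma psi_of_le {i j : Fin n} (hji : j ≤ i) :
    psi n W i j = W j j + ∑ s ∈ Ioc (j : ℕ) i, wnat n W s j := by
  rcases hji.eq_or_lt with rfl | hlt
  · simp [psi]
  · rw [psi, if_neg (not_le.2 hlt), Icc_eq_cons_Ioc hji, sum_cons, ← Fin.map_valEmbedding_Ioc,
      sum_map]
    simp [wnat_val]

lemma psi_self (i : Fin n) : psi n W i i = W i i := by
  simp [psi]

lemma psi_eq_psi_fpred_add {i j : Fin n} (hji : j < i) :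
    psi n W i j = psi n W (fpred i) j + W i j := by
  rw [psi_of_le W hji.le, psi_of_le W (Fin.le_def.2 (by rw [fpred_val]; omega)),
    sum_Ioc_eq_sum_Ioc_fpred_add _ hji, wnat_val, add_assoc]

end Psi

def lowerBidiag {n : ℕ} (w : ℕ → WithBot ℝ) : Matrix (Fin n) (Fin n) (WithBot ℝ) :=
  fun a b => if a = b then 0 else if a.val = b.val + 1 then w a else ⊥

section LowerBidiagonal

variable {n : ℕ} {w w' : ℕ → WithBot ℝ}

lemma xLow_eq_lowerBidiag (a : ℕ) (s : ℝ) :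
    xLow n a s = lowerBidiag fun r => if r = a + 1 then (s : WithBot ℝ) else ⊥ := by
  ext i j
  simp only [xLow, lowerBidiag]
  split_ifs <;> first | rfl | omega

lemma tropId_eq_lowerBidiag : tropId n = lowerBidiag ⊥ := by
  ext i j
  simp only [tropId, lowerBidiag]
  split_ifs <;> rfl

lemma lowerBidiag_tropMul_apply (hw : w 0 = ⊥) (N : Matrix (Fin n) (Fin n) (WithBot ℝ))
    (i j : Fin n) : tropMul (lowerBidiag w) N i j = N i j ⊔ (w i + N (fpred i) j) := by
  apply le_antisymm
  · refine Finset.sup_le fun k _ => ?_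
    simp only [lowerBidiag]
    split_ifs with hik hk
    · simp [hik]
    · obtain rfl : k = fpred i := Fin.ext (by rw [fpred_val]; omega)
      exact le_sup_right
    · simp
  · refine sup_le ?_ ?_
    · simpa [lowerBidiag] using le_tropMul (lowerBidiag w) N i j i
    · rcases Nat.eq_zero_or_pos i.val with hi | hi
      · simp [hi, hw]
      · have hne : i ≠ fpred i := Fin.ne_of_val_ne (by rw [fpred_val]; omega)
        simpa [lowerBidiag, hne, fpred_val, show i.val - 1 + 1 = i.val by omega]
          using le_tropMul (lowerBidiag w) N i j (fpred i)

lemma lowerBidiag_tropMul_lowerBidiag (hw : w 0 = ⊥) (hww' : ∀ a, w (a + 1) + w' a = ⊥) :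
    tropMul (lowerBidiag w) (lowerBidiag w') = lowerBidiag (n := n) (w ⊔ w') := by
  ext i j
  rw [lowerBidiag_tropMul_apply hw]
  simp only [lowerBidiag, fpred_val, Fin.ext_iff, Pi.sup_apply]
  split_ifs <;> first | omega | simp_all [show (j : ℕ) = 0 by omega] | simp_all [max_comm]

end LowerBidiagonal

section LowerNetwork

variable {n : ℕ} (W : Matrix (Fin n) (Fin n) ℝ)

def subdiagWeight (d m : ℕ) : ℕ → WithBot ℝ :=
  fun r => if d ≤ r ∧ r < m then (wnat n W r (r - d) : WithBot ℝ) else ⊥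

/-- The product `B_d ⊙ ⋯ ⊙ B_1` of the last `d` subdiagonal blocks of `L(W)`. -/
def lowerNet : ℕ → Matrix (Fin n) (Fin n) (WithBot ℝ)
  | 0 => tropId n
  | d + 1 => tropMul (lowerBidiag (subdiagWeight W (d + 1) n)) (lowerNet d)

lemma lowerNet_succ (d : ℕ) :
    lowerNet W (d + 1) = tropMul (lowerBidiag (subdiagWeight W (d + 1) n)) (lowerNet W d) := rfl

lemma foldl_xLow_eq_lowerBidiag {k : ℕ} (hk : k + 2 ≤ n) {t : ℕ} (ht : t ≤ k + 1) :
    ((List.range t).map fun t => xLow n (n - k + t - 2) (wnat n W (n - k + t - 1) t)).foldl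
      tropMul (tropId n) = lowerBidiag (subdiagWeight W (n - 1 - k) (n - 1 - k + t)) := by
  induction t with
  | zero =>
    rw [List.range_zero, List.map_nil, List.foldl_nil, tropId_eq_lowerBidiag]
    congr 1
    funext r
    simp [subdiagWeight]
  | succ t ih =>
    rw [List.range_succ, List.map_append, List.foldl_append, ih (by omega)]
    simp only [List.map_cons, List.map_nil, List.foldl_cons, List.foldl_nil,
      xLow_eq_lowerBidiag]
    rw [lowerBidiag_tropMul_lowerBidiag]
    · congr 1
      funext r
      simp only [subdiagWeight, Pi.sup_apply]
      split_ifs <;> first | omega | simp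
      subst r
      congr 1 <;> omega
    · rw [subdiagWeight, if_neg (by omega)]
    · intro a
      simp only [subdiagWeight]
      split_ifs <;> first | omega | simp

lemma Lmat_eq_lowerNet : Lmat n W = lowerNet W (n - 1) := by
  have key : ∀ m ≤ n - 1, tropMul (((List.range m).flatMap fun k => (List.range (k + 1)).map
      fun t => xLow n (n - k + t - 2) (wnat n W (n - k + t - 1) t)).foldl tropMul (tropId n))
      (lowerNet W (n - 1 - m)) = lowerNet W (n - 1) := by
    intro m hm
    induction m with
    | zero => exact tropId_tropMul _
    | succ m ih =>
      rw [← ih (by omega), List.range_succ, List.flatMap_append, List.foldl_append,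
        List.flatMap_singleton, foldl_tropMul _ (List.map _ _), ← foldl_tropMul_tropId,
        foldl_xLow_eq_lowerBidiag W (by omega) le_rfl, tropMul_assoc,
        show n - 1 - m = n - 1 - (m + 1) + 1 by omega, lowerNet_succ,
        show n - 1 - (m + 1) + 1 + (m + 1) = n by omega]
  simpa [Lmat, lowerNet, tropMul_tropId] using key (n - 1) le_rfl

def rowPrefixSup (i b : ℕ) : WithBot ℝ :=
  (range b).sup fun c => (wnat n W i c : WithBot ℝ)

lemma wnat_le_rowPrefixSup {i c b : ℕ} (h : c < b) :
    (wnat n W i c : WithBot ℝ) ≤ rowPrefixSup W i b :=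
  le_sup (f := fun c => (wnat n W i c : WithBot ℝ)) (mem_range.2 h)

lemma rowPrefixSup_mono (i : ℕ) {b b' : ℕ} (h : b ≤ b') :
    rowPrefixSup W i b ≤ rowPrefixSup W i b' :=
  sup_mono (range_subset_range.2 h)

variable {W}

lemma lowerNet_succ_apply (d : ℕ) (i j : Fin n) :
    lowerNet W (d + 1) i j =
      lowerNet W d i j ⊔ (subdiagWeight W (d + 1) n i + lowerNet W d (fpred i) j) :=
  lowerBidiag_tropMul_apply (by simp [subdiagWeight]) _ i j

lemma lowerNet_le_succ (d : ℕ) (i j : Fin n) : lowerNet W d i j ≤ lowerNet W (d + 1) i j := by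
  rw [lowerNet_succ_apply]
  exact le_sup_left

lemma lowerNet_eq_bot {d : ℕ} {i j : Fin n} (h : i.val < j.val ∨ j.val + d < i.val) :
    lowerNet W d i j = ⊥ := by
  induction d generalizing i with
  | zero => exact if_neg (Fin.ne_of_val_ne (by omega))
  | succ d ih =>
    rw [lowerNet_succ_apply, ih (i := i) (by omega), ih (i := fpred i) (by rw [fpred_val]; omega)]
    simp

lemma lowerNet_diag (d : ℕ) (i : Fin n) : lowerNet W d i i = 0 := by
  induction d with
  | zero => exact if_pos rfl
  | succ d ih =>
    rw [lowerNet_succ_apply, ih]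
    rcases Nat.eq_zero_or_pos i.val with hi | hi
    · simp [subdiagWeight, hi]
    · simp [lowerNet_eq_bot (Or.inl (show (fpred i).val < i.val by rw [fpred_val]; omega))]

lemma sum_le_lowerNet {d c : ℕ} {i j : Fin n} (hcj : c ≤ j.val) (hji : j.val ≤ i.val)
    (hic : i.val ≤ c + d) :
    ((∑ s ∈ Ioc (j : ℕ) i, wnat n W s c : ℝ) : WithBot ℝ) ≤ lowerNet W d i j := by
  induction d generalizing i with
  | zero =>
    obtain rfl : i = j := Fin.ext (by omega)
    simp [lowerNet_diag]
  | succ d ih =>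
    rcases hji.eq_or_lt with hij | hij
    · obtain rfl : i = j := Fin.ext hij.symm
      simp [lowerNet_diag]
    by_cases hid : i.val ≤ c + d
    · exact (ih hji hid).trans (lowerNet_le_succ d i j)
    have hw : subdiagWeight W (d + 1) n i = wnat n W i c := by
      rw [subdiagWeight, if_pos ⟨by omega, i.isLt⟩, show i.val - (d + 1) = c by omega]
    rw [lowerNet_succ_apply, sum_Ioc_eq_sum_Ioc_fpred_add _ hij, WithBot.coe_add, add_comm, hw]
    exact le_sup_of_le_right (add_le_add_right
      (ih (i := fpred i) (by rw [fpred_val]; omega) (by rw [fpred_val]; omega)) _)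

lemma lowerNet_le_sum {d : ℕ} {i j : Fin n} (h : i.val = j.val + d) :
    lowerNet W d i j ≤ ((∑ s ∈ Ioc (j : ℕ) i, wnat n W s j : ℝ) : WithBot ℝ) := by
  induction d generalizing i with
  | zero =>
    obtain rfl : i = j := Fin.ext (by omega)
    simp [lowerNet_diag]
  | succ d ih =>
    have hw : subdiagWeight W (d + 1) n i = wnat n W i j := by
      rw [subdiagWeight, if_pos ⟨by omega, i.isLt⟩, show i.val - (d + 1) = j.val by omega]
    rw [lowerNet_succ_apply, lowerNet_eq_bot (Or.inr (by omega)), bot_sup_eq, hw,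
      sum_Ioc_eq_sum_Ioc_fpred_add _ (show j.val < i.val by omega), WithBot.coe_add, add_comm]
    exact add_le_add_left (ih (i := fpred i) (by rw [fpred_val]; omega)) _

lemma lowerNet_le {d : ℕ} {i j : Fin n} (hji : j.val ≤ i.val) :
    lowerNet W d i j ≤ ((∑ s ∈ Ioc (j : ℕ) i, wnat n W s j : ℝ) : WithBot ℝ) ⊔
      (rowPrefixSup W i j + lowerNet W d (fpred i) j) := by
  induction d with
  | zero =>
    rcases hji.eq_or_lt with h | h
    · exact le_sup_of_le_left (lowerNet_le_sum (by omega))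
    · rw [lowerNet_eq_bot (Or.inr (by omega))]
      exact bot_le
  | succ d ih =>
    rw [lowerNet_succ_apply d i j]
    refine sup_le (ih.trans (sup_le_sup_left (add_le_add_right (lowerNet_le_succ d _ j) _) _)) ?_
    rw [subdiagWeight]
    split_ifs with hd
    swap
    · simp
    -- the new first step of the path, from row `i` in column `i - (d + 1)`
    rcases lt_trichotomy (i.val - (d + 1)) j.val with hc | hc | hc
    · exact le_sup_of_le_right (add_le_add (wnat_le_rowPrefixSup W hc) (lowerNet_le_succ d _ j))
    · refine le_sup_of_le_left ?_
      rw [hc, sum_Ioc_eq_sum_Ioc_fpred_add _ (show j.val < i.val by omega), WithBot.coe_add,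
        add_comm _ ((wnat n W i j : ℝ) : WithBot ℝ)]
      exact add_le_add_right (lowerNet_le_sum (by rw [fpred_val]; omega)) _
    · rw [lowerNet_eq_bot (Or.inr (by rw [fpred_val]; omega)), WithBot.add_bot]
      exact bot_le

end LowerNetwork

section Transfer

variable {n : ℕ} {W : Matrix (Fin n) (Fin n) ℝ}

lemma Lmat_diag (i : Fin n) : Lmat n W i i = 0 := by
  rw [Lmat_eq_lowerNet, lowerNet_diag]

lemma Lmat_eq_bot {i j : Fin n} (h : i < j) : Lmat n W i j = ⊥ := by
  rw [Lmat_eq_lowerNet, lowerNet_eq_bot (Or.inl h)]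

lemma sum_le_Lmat {c : ℕ} {i j : Fin n} (hcj : c ≤ j.val) (hji : j ≤ i) :
    ((∑ s ∈ Ioc (j : ℕ) i, wnat n W s c : ℝ) : WithBot ℝ) ≤ Lmat n W i j := by
  rw [Lmat_eq_lowerNet]
  exact sum_le_lowerNet hcj hji (by omega)

lemma Lmat_le {i j : Fin n} (hji : j ≤ i) :
    Lmat n W i j ≤ ((∑ s ∈ Ioc (j : ℕ) i, wnat n W s j : ℝ) : WithBot ℝ) ⊔
      (rowPrefixSup W i j + Lmat n W (fpred i) j) := by
  rw [Lmat_eq_lowerNet]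
  exact lowerNet_le hji

lemma Lmat_le_of_lt {i k : Fin n} (hki : k < i) :
    Lmat n W i k ≤ rowPrefixSup W i (k + 1) + Lmat n W (fpred i) k := by
  refine (Lmat_le hki.le).trans
    (sup_le ?_ (add_le_add_left (rowPrefixSup_mono W _ (Nat.le_succ k.val)) _))
  rw [sum_Ioc_eq_sum_Ioc_fpred_add _ hki, WithBot.coe_add, add_comm]
  exact add_le_add (wnat_le_rowPrefixSup W (Nat.lt_succ_self k.val))
    (sum_le_Lmat le_rfl (Fin.le_def.2 (by rw [fpred_val]; omega)))

lemma Dmat_eq : Dmat n W = tropDiag fun j => (W j j : WithBot ℝ) := by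
  have key : ∀ m, ((List.range m).map fun i => xDiag n i (wnat n W i i)).foldl tropMul (tropId n)
      = tropDiag fun j => if j.val < m then (W j j : WithBot ℝ) else 0 := by
    intro m
    induction m with
    | zero =>
      simp only [List.range_zero, List.map_nil, List.foldl_nil, Nat.not_lt_zero, if_false]
      rfl
    | succ m ih =>
      rw [List.range_succ, List.map_append, List.foldl_append, ih]
      simp only [List.map_cons, List.map_nil, List.foldl_cons, List.foldl_nil]
      rw [xDiag_eq_tropDiag, tropDiag_tropMul_tropDiag]
      congr 1
      funext j
      by_cases hj : j.val = m
      · subst hj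
        simp [wnat_val]
      · simp only [Pi.add_apply, hj, if_false, add_zero]
        congr 1
        simp only [eq_iff_iff]
        omega
  simpa [Dmat] using key n

lemma Tmat_apply (i j : Fin n) :
    Tmat n W i j =
      univ.sup fun k => Lmat n W i k + ((W k k : WithBot ℝ) + Lmat n W.transpose j k) := by
  rw [Tmat, tropMul_apply]
  simp only [Dmat_eq, tropMul_tropDiag_apply, Matrix.transpose_apply, add_assoc]

lemma le_Tmat (i j k : Fin n) :
    Lmat n W i k + ((W k k : WithBot ℝ) + Lmat n W.transpose j k) ≤ Tmat n W i j := by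
  rw [Tmat_apply]
  exact le_sup (f := fun k => Lmat n W i k + ((W k k : WithBot ℝ) + Lmat n W.transpose j k))
    (mem_univ k)

lemma Tmat_transpose (i j : Fin n) : Tmat n W.transpose i j = Tmat n W j i := by
  rw [Tmat_apply, Tmat_apply, Matrix.transpose_transpose]
  congr 1
  funext k
  rw [Matrix.transpose_apply]
  ac_rfl

lemma psi_le_Tmat {i j : Fin n} (hji : j ≤ i) : (psi n W i j : WithBot ℝ) ≤ Tmat n W i j := by
  refine le_trans ?_ (le_Tmat i j j)
  rw [psi_of_le W hji, Lmat_diag, add_zero, add_comm, WithBot.coe_add]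
  exact add_le_add_left (sum_le_Lmat le_rfl hji) _

lemma Tmat_le {i j : Fin n} (hji : j ≤ i) :
    Tmat n W i j ≤ (psi n W i j : WithBot ℝ) ⊔ (rowPrefixSup W i j + Tmat n W (fpred i) j) := by
  rw [Tmat_apply, psi_of_le W hji]
  refine Finset.sup_le fun k _ => ?_
  rcases lt_trichotomy k j with hkj | rfl | hjk
  · refine le_sup_of_le_right ?_
    calc Lmat n W i k + ((W k k : WithBot ℝ) + Lmat n W.transpose j k)
        ≤ rowPrefixSup W i (k + 1) + Lmat n W (fpred i) k +
            ((W k k : WithBot ℝ) + Lmat n W.transpose j k) :=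
          add_le_add_left (Lmat_le_of_lt (hkj.trans_le hji)) _
      _ = rowPrefixSup W i (k + 1) +
            (Lmat n W (fpred i) k + ((W k k : WithBot ℝ) + Lmat n W.transpose j k)) :=
          add_assoc _ _ _
      _ ≤ rowPrefixSup W i j + Tmat n W (fpred i) j :=
          add_le_add (rowPrefixSup_mono W _ hkj) (le_Tmat _ _ _)
  · rw [Lmat_diag, add_zero]
    refine (add_le_add_left (Lmat_le hji) _).trans ?_
    rw [← max_add_add_right (α := WithBot ℝ), WithBot.coe_add, add_comm (W k k : WithBot ℝ),
      add_assoc]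
    refine sup_le_sup_left (add_le_add_right ?_ _) _
    simpa [Lmat_diag] using le_Tmat (W := W) (fpred i) k k
  · rw [Lmat_eq_bot hjk, WithBot.add_bot, WithBot.add_bot]
    exact bot_le

end Transfer

lemma tropPermSup_two_one (B : Matrix (Fin 2) (Fin 2) (WithBot ℝ)) :
    tropPermSup 2 1 B = B 0 0 + B 1 1 := by
  rw [tropPermSup, show (univ.filter fun σ : Equiv.Perm (Fin 2) => Equiv.Perm.sign σ = 1) = {1}
    by decide]
  simp [Fin.sum_univ_two]

lemma tropPermSup_two_neg_one (B : Matrix (Fin 2) (Fin 2) (WithBot ℝ)) :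
    tropPermSup 2 (-1) B = B 0 1 + B 1 0 := by
  rw [tropPermSup, show (univ.filter fun σ : Equiv.Perm (Fin 2) => Equiv.Perm.sign σ = -1) =
    {Equiv.swap 0 1} by decide]
  simp [Fin.sum_univ_two]

/-- Positivity of all tropical `2 × 2` minors of `A`. -/
def StrictSupermodular {n : ℕ} (A : Matrix (Fin n) (Fin n) ℝ) : Prop :=
  ∀ ⦃r₀ r₁ c₀ c₁ : Fin n⦄, r₀ < r₁ → c₀ < c₁ → A r₀ c₁ + A r₁ c₀ < A r₀ c₀ + A r₁ c₁

section StrictSupermodular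

variable {n : ℕ} {A W : Matrix (Fin n) (Fin n) ℝ}

lemma IsTropTP.strictSupermodular (hA : IsTropTP n A) : StrictSupermodular A := by
  intro r₀ r₁ c₀ c₁ hr hc
  have h := hA 2 le_rfl ![r₀, r₁] ![c₀, c₁] (by simpa [Fin.strictMono_iff_lt_succ] using hr)
    (by simpa [Fin.strictMono_iff_lt_succ] using hc)
  rw [tropPermSup_two_one, tropPermSup_two_neg_one] at h
  simpa [← WithBot.coe_add] using h

lemma StrictSupermodular.transpose (hA : StrictSupermodular A) :
    StrictSupermodular A.transpose := fun r₀ r₁ c₀ c₁ hr hc => by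
  simp only [Matrix.transpose_apply]
  linarith [hA hc hr]

theorem StrictSupermodular.eq_psi (hA : StrictSupermodular A)
    (hT : Tmat n W = A.map ((↑) : ℝ → WithBot ℝ)) {i j : Fin n} (hji : j ≤ i) :
    A i j = psi n W i j := by
  have hTA : ∀ i j, Tmat n W i j = A i j := fun i j => by rw [hT]; rfl
  induction i using WellFoundedLT.induction generalizing j with
  | _ i ih =>
  have hlow := psi_le_Tmat (W := W) hji
  have hup := Tmat_le (W := W) hji
  simp only [hTA] at hlow hup
  have hdom : rowPrefixSup W i j + A (fpred i) j < A i j := by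
    rw [rowPrefixSup, WithBot.finset_sup_add, Finset.sup_lt_iff (WithBot.bot_lt_coe _)]
    intro c hc
    rw [mem_range] at hc
    have hi : fpred i < i := Fin.lt_def.2 (by rw [fpred_val]; omega)
    let c' : Fin n := ⟨c, by omega⟩
    have hc'i : c' < i := Fin.lt_def.2 (show c < i.val by omega)
    have hprev := ih (fpred i) hi (j := c') (Fin.le_def.2 (show c ≤ i.val - 1 by omega))
    have hcur := psi_le_Tmat (W := W) hc'i.le
    rw [hTA, psi_eq_psi_fpred_add W hc'i, WithBot.coe_le_coe] at hcur
    have hmin := hA hi (show c' < j from Fin.lt_def.2 hc)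
    have hw : wnat n W i c = W i c' := wnat_val W i c'
    rw [← WithBot.coe_add, WithBot.coe_lt_coe]
    linarith
  rcases le_sup_iff.1 hup with h | h
  · exact_mod_cast le_antisymm h hlow
  · exact absurd h (not_le.2 hdom)

theorem StrictSupermodular.diag_eq (hA : StrictSupermodular A)
    (hT : Tmat n W = A.map ((↑) : ℝ → WithBot ℝ)) (j : Fin n) : A j j = W j j := by
  rw [hA.eq_psi hT le_rfl, psi_self]

theorem StrictSupermodular.eq_fpred_add (hA : StrictSupermodular A)
    (hT : Tmat n W = A.map ((↑) : ℝ → WithBot ℝ)) {i j : Fin n} (hji : j < i) :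
    A i j = A (fpred i) j + W i j := by
  rw [hA.eq_psi hT hji.le, hA.eq_psi hT (Fin.le_def.2 (by rw [fpred_val]; omega)),
    psi_eq_psi_fpred_add W hji]

end StrictSupermodular

/-- any weight matrix representing a tropical totally positive
matrix satisfies the strict trapeze and parallelogram inequalities. -/
theorem weights_of_TP_strict_ineqs (n : ℕ) (A W : Matrix (Fin n) (Fin n) ℝ)
    (hA : IsTropTP n A) (hW : Tmat n W = A.map ((↑) : ℝ → WithBot ℝ)) :
    StrictTrapeze n W ∧ StrictPara n W := by
  have hM := hA.strictSupermodular
  have hWt : Tmat n W.transpose = A.transpose.map ((↑) : ℝ → WithBot ℝ) := by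
    ext i j
    rw [Tmat_transpose, hW]
    rfl
  have hdiag := hM.diag_eq hW
  have hcol := fun {i j : Fin n} (h : j < i) => hM.eq_fpred_add hW h
  have hrow := fun {i j : Fin n} (h : j < i) => hM.transpose.eq_fpred_add hWt h
  simp only [Matrix.transpose_apply] at hrow
  refine ⟨fun i hi => ?_, fun i j hij => ?_⟩
  · have hp : fpred i < i := Fin.lt_def.2 (by rw [fpred_val]; omega)
    have := hM hp hp
    rw [hcol hp, hrow hp, hdiag, hdiag] at this
    linarith
  · set j' : Fin n := ⟨j.val + 1, by omega⟩
    have hp : fpred i < i := Fin.lt_def.2 (by rw [fpred_val]; omega)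
    have hjj' : j < j' := Fin.lt_def.2 (Nat.lt_succ_self _)
    have hj'i : j' < i := Fin.lt_def.2 (show j.val + 1 < i.val by omega)
    constructor
    · have := hM hp hjj'
      rw [hcol (hjj'.trans hj'i), hcol hj'i] at this
      linarith
    · have := hM hjj' hp
      rw [hrow (hjj'.trans hj'i), hrow hj'i] at this
      linarith
end

section
/- The map ψ restricts to a bijection from the set of matrices W ∈ Matrix (Fin n) (Fin n) ℝ satisfying the weak trapeze inequalities and the weak parallelogram inequalities onto the set TNtrop(ℝ) of n×n tropical totally nonnegative matrices with real entries. -/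
open Finset

section Aux

variable {n : ℕ}

/-- All two-by-two tropical minors are nonnegative. -/
def Two (n : ℕ) (A : Matrix (Fin n) (Fin n) ℝ) : Prop :=
  ∀ i j l m : Fin n, i < j → l < m → A i m + A j l ≤ A i l + A j m

lemma wnat_fin (W : Matrix (Fin n) (Fin n) ℝ) (i j : Fin n) :
    wnat n W i j = W i j := by
  simp [wnat, i.isLt, j.isLt]

lemma sum_Icc_fin (a b : Fin n) (g : ℕ → ℝ) (f : Fin n → ℝ)
    (hfg : ∀ t : Fin n, f t = g t.val) :
    ∑ t ∈ Finset.Icc a b, f t = ∑ u ∈ Finset.Icc a.val b.val, g u := by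
  rw [← Fin.map_valEmbedding_Icc, Finset.sum_map]
  exact Finset.sum_congr rfl fun t _ => hfg t

lemma psi_nat (W : Matrix (Fin n) (Fin n) ℝ) (i j : ℕ) (hi : i < n) (hj : j < n) :
    wnat n (psi n W) i j =
      if i ≤ j then ∑ t ∈ Finset.Icc i j, wnat n W i t
      else ∑ t ∈ Finset.Icc j i, wnat n W t j := by
  have h0 : wnat n (psi n W) i j = psi n W ⟨i, hi⟩ ⟨j, hj⟩ := by simp [wnat, hi, hj]
  rw [h0]
  unfold psi
  by_cases h : i ≤ j
  · rw [if_pos (show (⟨i, hi⟩ : Fin n) ≤ ⟨j, hj⟩ from h), if_pos h]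
    exact sum_Icc_fin _ _ _ _ fun t => (wnat_fin W _ t).symm
  · rw [if_neg (show ¬(⟨i, hi⟩ : Fin n) ≤ ⟨j, hj⟩ from h), if_neg h]
    exact sum_Icc_fin _ _ _ _ fun t => (wnat_fin W t _).symm

lemma Icc_sum_single (a : ℕ) (g : ℕ → ℝ) : ∑ t ∈ Finset.Icc a a, g t = g a := by
  rw [Finset.Icc_self, Finset.sum_singleton]

lemma Icc_sum_two (a : ℕ) (g : ℕ → ℝ) :
    ∑ t ∈ Finset.Icc a (a + 1), g t = g a + g (a + 1) := by
  rw [Finset.sum_Icc_succ_top (by omega), Icc_sum_single]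

lemma wnat_eq (W : Matrix (Fin n) (Fin n) ℝ) (a b : ℕ) (ha : a < n) (hb : b < n) :
    wnat n W a b = W ⟨a, ha⟩ ⟨b, hb⟩ := by simp [wnat, ha, hb]

lemma psi_nat_row (W : Matrix (Fin n) (Fin n) ℝ) (i j : ℕ) (hij : i ≤ j) (hj : j < n) :
    wnat n (psi n W) i j = ∑ t ∈ Finset.Icc i j, wnat n W i t := by
  rw [psi_nat W i j (lt_of_le_of_lt hij hj) hj, if_pos hij]

lemma psi_nat_col (W : Matrix (Fin n) (Fin n) ℝ) (i j : ℕ) (hji : j ≤ i) (hi : i < n) :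
    wnat n (psi n W) i j = ∑ t ∈ Finset.Icc j i, wnat n W t j := by
  rw [psi_nat W i j hi (lt_of_le_of_lt hji hi)]
  rcases eq_or_lt_of_le hji with rfl | h
  · rw [if_pos le_rfl, Icc_sum_single, Icc_sum_single]
  · rw [if_neg (by omega)]

lemma phi_nat (A : Matrix (Fin n) (Fin n) ℝ) (a b : ℕ) (ha : a < n) (hb : b < n) :
    wnat n (phi n A) a b =
      if a = b then wnat n A a b
      else if a < b then wnat n A a b - wnat n A a (b - 1)
      else wnat n A a b - wnat n A (a - 1) b := by
  rw [wnat_eq _ a b ha hb]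
  unfold phi
  by_cases h1 : a = b
  · rw [if_pos (show (⟨a, ha⟩ : Fin n) = ⟨b, hb⟩ from by simp [h1]), if_pos h1,
      wnat_eq A a b ha hb]
  · rw [if_neg (show ¬(⟨a, ha⟩ : Fin n) = ⟨b, hb⟩ from by simp [h1]), if_neg h1]
    by_cases h2 : a < b
    · rw [if_pos (show (⟨a, ha⟩ : Fin n) < ⟨b, hb⟩ from h2), if_pos h2,
        wnat_eq A a b ha hb,
        wnat_eq A a (b - 1) ha (Nat.lt_of_le_of_lt (Nat.sub_le _ _) hb)]
      rfl
    · rw [if_neg (show ¬(⟨a, ha⟩ : Fin n) < ⟨b, hb⟩ from h2), if_neg h2,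
        wnat_eq A a b ha hb,
        wnat_eq A (a - 1) b (Nat.lt_of_le_of_lt (Nat.sub_le _ _) ha) hb]
      rfl

lemma phi_psi (W : Matrix (Fin n) (Fin n) ℝ) : phi n (psi n W) = W := by
  funext i j
  have key : wnat n (phi n (psi n W)) i.val j.val = wnat n W i.val j.val := by
    rw [phi_nat _ _ _ i.isLt j.isLt]
    rcases lt_trichotomy i.val j.val with h | h | h
    · rw [if_neg (by omega), if_pos h,
        psi_nat_row _ _ _ (by omega) j.isLt,
        psi_nat_row _ _ _ (by omega) (Nat.lt_of_le_of_lt (Nat.sub_le _ _) j.isLt)]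
      have hb : j.val = (j.val - 1) + 1 := by omega
      rw [show Finset.Icc i.val j.val = Finset.Icc i.val ((j.val - 1) + 1) from by rw [← hb],
        Finset.sum_Icc_succ_top (by omega), ← hb]
      ring
    · rw [if_pos h, psi_nat_row _ _ _ (by omega) j.isLt, h, Icc_sum_single]
    · rw [if_neg (by omega), if_neg (by omega),
        psi_nat_col _ _ _ (by omega) i.isLt,
        psi_nat_col _ _ _ (by omega) (Nat.lt_of_le_of_lt (Nat.sub_le _ _) i.isLt)]
      have hb : i.val = (i.val - 1) + 1 := by omega
      rw [show Finset.Icc j.val i.val = Finset.Icc j.val ((i.val - 1) + 1) from by rw [← hb],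
        Finset.sum_Icc_succ_top (by omega), ← hb]
      ring
  rwa [wnat_fin, wnat_fin] at key

lemma psi_phi (A : Matrix (Fin n) (Fin n) ℝ) : psi n (phi n A) = A := by
  have row : ∀ (a : ℕ) (_ : a < n) (b : ℕ), a ≤ b → b < n →
      ∑ t ∈ Finset.Icc a b, wnat n (phi n A) a t = wnat n A a b := by
    intro a ha b hab hb
    induction b, hab using Nat.le_induction with
    | base => rw [Icc_sum_single, phi_nat _ _ _ ha ha, if_pos rfl]
    | succ b hab ih =>
      rw [Finset.sum_Icc_succ_top (by omega), ih (by omega),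
        phi_nat _ _ _ ha hb, if_neg (by omega), if_pos (by omega)]
      simp
  have col : ∀ (a : ℕ) (_ : a < n) (b : ℕ), a ≤ b → b < n →
      ∑ t ∈ Finset.Icc a b, wnat n (phi n A) t a = wnat n A b a := by
    intro a ha b hab hb
    induction b, hab using Nat.le_induction with
    | base => rw [Icc_sum_single, phi_nat _ _ _ ha ha, if_pos rfl]
    | succ b hab ih =>
      rw [Finset.sum_Icc_succ_top (by omega), ih (by omega),
        phi_nat _ _ _ hb ha, if_neg (by omega), if_neg (by omega)]
      simp
  funext i j
  have key : wnat n (psi n (phi n A)) i.val j.val = wnat n A i.val j.val := by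
    by_cases h : i.val ≤ j.val
    · rw [psi_nat_row _ _ _ h j.isLt]; exact row i.val i.isLt j.val h j.isLt
    · rw [psi_nat_col _ _ _ (by omega) i.isLt]; exact col j.val j.isLt i.val (by omega) i.isLt
  rwa [wnat_fin, wnat_fin] at key

end Aux

section Aux2

variable {n : ℕ}

lemma P_diag (W : Matrix (Fin n) (Fin n) ℝ) (b : ℕ) (hb : b < n) :
    wnat n (psi n W) b b = wnat n W b b := by
  rw [psi_nat_row _ _ _ le_rfl hb, Icc_sum_single]

lemma P_up (W : Matrix (Fin n) (Fin n) ℝ) (b : ℕ) (hb : b + 1 < n) :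
    wnat n (psi n W) b (b+1) = wnat n W b b + wnat n W b (b+1) := by
  rw [psi_nat_row _ _ _ (by omega) hb, Icc_sum_two]

lemma P_dn (W : Matrix (Fin n) (Fin n) ℝ) (b : ℕ) (hb : b + 1 < n) :
    wnat n (psi n W) (b+1) b = wnat n W b b + wnat n W (b+1) b := by
  rw [psi_nat_col _ _ _ (by omega) hb, Icc_sum_two]

lemma P_row_step (W : Matrix (Fin n) (Fin n) ℝ) (i j : ℕ) (hij : i ≤ j) (hj : j + 1 < n) :
    wnat n (psi n W) i (j+1) = wnat n (psi n W) i j + wnat n W i (j+1) := by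
  rw [psi_nat_row _ _ _ (by omega) hj, psi_nat_row _ _ _ hij (by omega),
    Finset.sum_Icc_succ_top (by omega)]

lemma P_col_step (W : Matrix (Fin n) (Fin n) ℝ) (i j : ℕ) (hji : j ≤ i) (hi : i + 1 < n) :
    wnat n (psi n W) (i+1) j = wnat n (psi n W) i j + wnat n W (i+1) j := by
  rw [psi_nat_col _ _ _ (by omega) hi, psi_nat_col _ _ _ hji (by omega),
    Finset.sum_Icc_succ_top (by omega)]

/-- Nat-level trapeze inequalities. -/
lemma trap_nat (W : Matrix (Fin n) (Fin n) ℝ) (hT : WeakTrapeze n W) (b : ℕ) (hb : b + 1 < n) :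
    wnat n W (b+1) b + wnat n W b b + wnat n W b (b+1) ≤ wnat n W (b+1) (b+1) := by
  have := hT ⟨b+1, hb⟩ (Nat.succ_pos b)
  rw [wnat_eq W (b+1) b hb (by omega), wnat_eq W b b (by omega) (by omega),
    wnat_eq W b (b+1) (by omega) hb, wnat_eq W (b+1) (b+1) hb hb]
  exact this

/-- Nat-level first parallelogram inequalities. -/
lemma para1_nat (W : Matrix (Fin n) (Fin n) ℝ) (hP : WeakPara n W) (i j : ℕ)
    (h : j + 2 ≤ i) (hi : i < n) :
    wnat n W i j ≤ wnat n W i (j+1) := by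
  have := (hP ⟨i, hi⟩ ⟨j, by omega⟩ h).1
  rw [wnat_eq W i j hi (by omega), wnat_eq W i (j+1) hi (by omega)]
  exact this

/-- Nat-level second parallelogram inequalities. -/
lemma para2_nat (W : Matrix (Fin n) (Fin n) ℝ) (hP : WeakPara n W) (i j : ℕ)
    (h : j + 2 ≤ i) (hi : i < n) :
    wnat n W j i ≤ wnat n W (j+1) i := by
  have := (hP ⟨i, hi⟩ ⟨j, by omega⟩ h).2
  rw [wnat_eq W j i (by omega) hi, wnat_eq W (j+1) i (by omega) hi]
  exact this

/-- Adjacent two-by-two inequality for `psi W`. -/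
lemma adj_two (W : Matrix (Fin n) (Fin n) ℝ) (hT : WeakTrapeze n W) (hP : WeakPara n W)
    (i j : ℕ) (hi : i + 1 < n) (hj : j + 1 < n) :
    wnat n (psi n W) i (j+1) + wnat n (psi n W) (i+1) j ≤
      wnat n (psi n W) i j + wnat n (psi n W) (i+1) (j+1) := by
  rcases lt_trichotomy i j with h | rfl | h
  · rw [P_row_step W i j (by omega) hj, P_row_step W (i+1) j (by omega) hj]
    have := para2_nat W hP (j+1) i (by omega) hj
    linarith
  · rw [P_up W i hj, P_dn W i hi, P_diag W i (by omega), P_diag W (i+1) hi]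
    have := trap_nat W hT i hi
    linarith
  · rw [P_col_step W i j (by omega) hi, P_col_step W i (j+1) (by omega) hi]
    have := para1_nat W hP (i+1) j (by omega) hi
    linarith

/-- Chaining adjacent two-by-two inequalities to all of them. -/
lemma two_of_adj (A : Matrix (Fin n) (Fin n) ℝ)
    (h : ∀ i j : ℕ, i + 1 < n → j + 1 < n →
      wnat n A i (j+1) + wnat n A (i+1) j ≤ wnat n A i j + wnat n A (i+1) (j+1)) :
    Two n A := by
  have cols : ∀ i l : ℕ, i + 1 < n → ∀ m : ℕ, l ≤ m → m < n →
      wnat n A i m + wnat n A (i+1) l ≤ wnat n A i l + wnat n A (i+1) m := by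
    intro i l hi m hlm
    induction m, hlm using Nat.le_induction with
    | base => intro _; linarith
    | succ m hlm ih =>
      intro hm
      have h1 := h i m hi hm
      have h2 := ih (by omega)
      linarith
  have rows : ∀ l m i : ℕ, l ≤ m → m < n → ∀ j : ℕ, i ≤ j → j < n →
      wnat n A i m + wnat n A j l ≤ wnat n A i l + wnat n A j m := by
    intro l m i hlm hm j hij
    induction j, hij using Nat.le_induction with
    | base => intro _; linarith
    | succ j hij ih =>
      intro hjn
      have h1 := cols j l (by omega) m hlm hm
      have h2 := ih (by omega)
      linarith
  intro i j l m hij hlm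
  have key := rows l.val m.val i.val (le_of_lt hlm) m.isLt j.val (le_of_lt hij) j.isLt
  rwa [wnat_fin, wnat_fin, wnat_fin, wnat_fin] at key

lemma two_psi_of (W : Matrix (Fin n) (Fin n) ℝ) (hT : WeakTrapeze n W) (hP : WeakPara n W) :
    Two n (psi n W) :=
  two_of_adj _ (fun i j hi hj => adj_two W hT hP i j hi hj)

/-- Adjacent two-by-two inequalities from `Two`. -/
lemma adj_of_two (A : Matrix (Fin n) (Fin n) ℝ) (h : Two n A) (i j : ℕ)
    (hi : i + 1 < n) (hj : j + 1 < n) :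
    wnat n A i (j+1) + wnat n A (i+1) j ≤ wnat n A i j + wnat n A (i+1) (j+1) := by
  have := h ⟨i, by omega⟩ ⟨i+1, hi⟩ ⟨j, by omega⟩ ⟨j+1, hj⟩ (by simp [Fin.lt_def]) (by simp [Fin.lt_def])
  rw [wnat_eq A i (j+1) (by omega) hj, wnat_eq A (i+1) j hi (by omega),
    wnat_eq A i j (by omega) (by omega), wnat_eq A (i+1) (j+1) hi hj]
  exact this

lemma trapeze_of_two (W : Matrix (Fin n) (Fin n) ℝ) (h : Two n (psi n W)) :
    WeakTrapeze n W := by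
  intro i hi
  obtain ⟨b, hb⟩ : ∃ b, i.val = b + 1 := ⟨i.val - 1, by omega⟩
  have hbn : b + 1 < n := hb ▸ i.isLt
  have key := adj_of_two _ h b b hbn hbn
  rw [P_up W b hbn, P_dn W b hbn, P_diag W b (by omega), P_diag W (b+1) hbn] at key
  have e1 : W i (fpred i) = wnat n W (b+1) b := by
    rw [wnat_eq W (b+1) b hbn (by omega)]
    congr 1
    · exact Fin.ext hb
    · exact Fin.ext (by simp [fpred, hb])
  have e2 : W (fpred i) (fpred i) = wnat n W b b := by
    rw [wnat_eq W b b (by omega) (by omega)]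
    congr 1 <;> exact Fin.ext (by simp [fpred, hb])
  have e3 : W (fpred i) i = wnat n W b (b+1) := by
    rw [wnat_eq W b (b+1) (by omega) hbn]
    congr 1
    · exact Fin.ext (by simp [fpred, hb])
    · exact Fin.ext hb
  have e4 : W i i = wnat n W (b+1) (b+1) := by
    rw [wnat_eq W (b+1) (b+1) hbn hbn]
    congr 1 <;> exact Fin.ext hb
  rw [e1, e2, e3, e4]
  linarith

lemma para_of_two (W : Matrix (Fin n) (Fin n) ℝ) (h : Two n (psi n W)) :
    WeakPara n W := by
  intro i j hij
  obtain ⟨a, ha⟩ : ∃ a, i.val = a + 1 := ⟨i.val - 1, by omega⟩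
  have han : a + 1 < n := ha ▸ i.isLt
  have hja : j.val + 1 ≤ a := by omega
  constructor
  · have key := adj_of_two _ h a j.val han (by omega)
    rw [P_col_step W a j.val (by omega) han, P_col_step W a (j.val+1) (by omega) han] at key
    have e1 : W i j = wnat n W (a+1) j.val := by
      rw [wnat_eq W (a+1) j.val han j.isLt]
      congr 1
      exact Fin.ext ha
    have e2 : W i ⟨j.val + 1, by have := i.isLt; omega⟩ = wnat n W (a+1) (j.val+1) := by
      rw [wnat_eq W (a+1) (j.val+1) han (by omega)]
      congr 1
      exact Fin.ext ha
    rw [e1, e2]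
    linarith
  · have key := adj_of_two _ h j.val a (by omega) han
    rw [P_row_step W j.val a (by omega) han, P_row_step W (j.val+1) a (by omega) han] at key
    have e1 : W j i = wnat n W j.val (a+1) := by
      rw [wnat_eq W j.val (a+1) j.isLt han]
      congr 1
      exact Fin.ext ha
    have e2 : W ⟨j.val + 1, by have := i.isLt; omega⟩ i = wnat n W (j.val+1) (a+1) := by
      rw [wnat_eq W (j.val+1) (a+1) (by omega) han]
      congr 1
      exact Fin.ext ha
    rw [e1, e2]
    linarith

end Aux2

section Aux3

variable {n : ℕ}

lemma exists_inversion {k : ℕ} (σ : Equiv.Perm (Fin k)) (hne : σ ≠ 1) :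
    ∃ a b : Fin k, a < b ∧ σ b < σ a := by
  by_contra hcon
  push_neg at hcon
  have hmono : StrictMono σ := fun a b hab =>
    lt_of_le_of_ne (hcon a b hab) (fun he => absurd (σ.injective he) (ne_of_lt hab))
  have hrange : Set.range σ = Set.range (id : Fin k → Fin k) := by
    rw [σ.surjective.range_eq, Set.range_id]
  have hw : WellFoundedLT (Fin k) := inferInstance
  have : ⇑σ = id :=
    (@StrictMono.range_inj (Fin k) (Fin k) _ _ hw ⇑σ id hmono strictMono_id).mp hrange
  exact hne (Equiv.ext fun x => congrFun this x)

lemma isTropTN_of_two (A : Matrix (Fin n) (Fin n) ℝ) (h2 : Two n A) :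
    IsTropTN n (A.map ((↑) : ℝ → WithBot ℝ)) := by
  intro k r c hr hc
  unfold tropPermSup
  apply Finset.sup_le
  intro σ hσ
  rw [Finset.mem_filter] at hσ
  have hsign : Equiv.Perm.sign σ = -1 := hσ.2
  have hne : σ ≠ 1 := by
    rintro rfl
    rw [map_one] at hsign
    exact absurd hsign (by decide)
  obtain ⟨a, b, hab, hba⟩ := exists_inversion σ hne
  set τ := σ * Equiv.swap a b with hτdef
  have hτsign : Equiv.Perm.sign τ = 1 := by
    rw [hτdef, map_mul, hsign, Equiv.Perm.sign_swap (ne_of_lt hab)]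
    decide
  have hτmem : τ ∈ Finset.univ.filter fun ρ : Equiv.Perm (Fin k) => Equiv.Perm.sign ρ = 1 :=
    Finset.mem_filter.mpr ⟨Finset.mem_univ τ, hτsign⟩
  refine le_trans ?_ (Finset.le_sup hτmem)
  -- both sides are coercions of real sums
  have coe_sum : ∀ ρ : Equiv.Perm (Fin k),
      (∑ i, ((A.map ((↑) : ℝ → WithBot ℝ)).submatrix r c) i (ρ i)) =
        ((∑ i, A (r i) (c (ρ i)) : ℝ) : WithBot ℝ) := by
    intro ρ
    rw [WithBot.coe_sum]
    rfl
  rw [coe_sum σ, coe_sum τ, WithBot.coe_le_coe]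
  have hsplit : ∀ g : Fin k → ℝ, ∑ i, g i = (∑ i ∈ Finset.univ \ {a, b}, g i) + (g a + g b) := by
    intro g
    rw [← Finset.sum_pair (ne_of_lt hab), Finset.sum_sdiff (Finset.subset_univ _)]
  rw [hsplit (fun i => A (r i) (c (σ i))), hsplit (fun i => A (r i) (c (τ i)))]
  have hoff : ∑ i ∈ Finset.univ \ {a, b}, A (r i) (c (τ i))
      = ∑ i ∈ Finset.univ \ {a, b}, A (r i) (c (σ i)) := by
    refine Finset.sum_congr rfl fun i hi => ?_
    rw [Finset.mem_sdiff, Finset.mem_insert, Finset.mem_singleton] at hi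
    push_neg at hi
    have : τ i = σ i := by
      rw [hτdef]
      simp [Equiv.swap_apply_of_ne_of_ne hi.2.1 hi.2.2]
    rw [this]
  rw [hoff]
  have hτa : τ a = σ b := by rw [hτdef]; simp
  have hτb : τ b = σ a := by rw [hτdef]; simp
  rw [hτa, hτb]
  have := h2 (r a) (r b) (c (σ b)) (c (σ a)) (hr hab) (hc hba)
  linarith

lemma two_of_isTropTN (A : Matrix (Fin n) (Fin n) ℝ)
    (h : IsTropTN n (A.map ((↑) : ℝ → WithBot ℝ))) : Two n A := by
  intro i j l m hij hlm
  have hr : StrictMono ![i, j] := Fin.strictMono_iff_lt_succ.mpr (by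
    intro t
    fin_cases t
    simpa using hij)
  have hc : StrictMono ![l, m] := Fin.strictMono_iff_lt_succ.mpr (by
    intro t
    fin_cases t
    simpa using hlm)
  have key := h 2 ![i, j] ![l, m] hr hc
  have hfilt1 : (Finset.univ.filter fun σ : Equiv.Perm (Fin 2) => Equiv.Perm.sign σ = 1)
      = {1} := by decide
  have hfiltm : (Finset.univ.filter fun σ : Equiv.Perm (Fin 2) => Equiv.Perm.sign σ = -1)
      = {Equiv.swap 0 1} := by decide
  unfold tropPermSup at key
  rw [hfilt1, hfiltm, Finset.sup_singleton, Finset.sup_singleton] at key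
  rw [Fin.sum_univ_two, Fin.sum_univ_two] at key
  simp only [Matrix.submatrix_apply, Matrix.map_apply, Equiv.Perm.one_apply] at key
  rw [show (Equiv.swap (0:Fin 2) 1) 0 = 1 from by decide,
      show (Equiv.swap (0:Fin 2) 1) 1 = 0 from by decide] at key
  simp only [Matrix.cons_val_zero, Matrix.cons_val_one, Matrix.head_cons] at key
  rw [← WithBot.coe_add, ← WithBot.coe_add, WithBot.coe_le_coe] at key
  linarith

end Aux3

/-- `ψ` is a bijection from the weight matrices satisfying the
weak trapeze and parallelogram inequalities onto `TNtrop(ℝ)`. -/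
theorem psi_bijOn_TN (n : ℕ) :
    Set.BijOn (psi n) {W | WeakTrapeze n W ∧ WeakPara n W}
      {A | IsTropTN n (A.map ((↑) : ℝ → WithBot ℝ))} := by
  refine ⟨?_, ?_, ?_⟩
  · intro W hW
    exact isTropTN_of_two _ (two_psi_of W hW.1 hW.2)
  · intro W₁ _ W₂ _ h
    calc W₁ = phi n (psi n W₁) := (phi_psi W₁).symm
    _ = phi n (psi n W₂) := by rw [h]
    _ = W₂ := phi_psi W₂
  · intro A hA
    refine ⟨phi n A, ⟨?_, ?_⟩, psi_phi A⟩
    · apply trapeze_of_two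
      rw [psi_phi]
      exact two_of_isTropTN A hA
    · apply para_of_two
      rw [psi_phi]
      exact two_of_isTropTN A hA
end

section
/- The max-plus product of any finite list of n×n tropical elementary Jacobi matrices with real parameters (the empty product being the tropical identity matrix, with 0 on the diagonal and −∞ elsewhere) is a tropical totally nonnegative matrix. -/
open Finset

/-! Right multiplication by an elementary Jacobi matrix is a column operation: `x∘_i(s)` adds `s`
to column `i`, while `x_i(s)` and `x̄_i(s)` replace a column `j₂` by its maximum with the adjacent
column `j₁` shifted by `s`. A permutation meets every column exactly once, so the first operation
shifts both sides of every minor inequality by `s`, and the second turns each side into the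
maximum of the old side and the side for the matrix whose column `j₂` is column `j₁ + s`. When
the minor also contains column `j₁`, this matrix has two columns differing by a constant and the
transposition of those columns exchanges even and odd permutations without changing weights;
otherwise it is a shifted minor of the old matrix, since adjacency preserves the column order.
The identity is tropical totally nonnegative because in any of its minors only the identity
permutation has finite weight. -/
theorem sum_updateCol_apply_perm {ι α : Type*} [Fintype ι] [DecidableEq ι] [AddCommMonoid α]
    (B : Matrix ι ι α) (p : ι) (v : ι → α) (σ : Equiv.Perm ι) :
    ∑ i, B.updateCol p v i (σ i) = v (σ.symm p) + ∑ i ∈ univ.erase (σ.symm p), B i (σ i) := by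
  rw [← add_sum_erase _ _ (mem_univ (σ.symm p))]
  congr 1
  · simp
  · refine sum_congr rfl fun i hi => Matrix.updateCol_ne fun h => (mem_erase.1 hi).1 ?_
    rw [← h, Equiv.symm_apply_apply]

section Submatrix

variable {l m n o α : Type*} [DecidableEq n] (A : Matrix m n α) (r : l → m) {c : o → n} {j : n}
  (v : m → α)

theorem Matrix.submatrix_updateCol_of_apply_eq [DecidableEq o] (hc : Function.Injective c)
    {p : o} (hp : c p = j) :
    (A.updateCol j v).submatrix r c = (A.submatrix r c).updateCol p (v ∘ r) := by
  ext a b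
  by_cases hb : b = p
  · subst hb; simp [hp]
  · have : c b ≠ j := hp ▸ hc.ne hb
    simp [Matrix.updateCol_ne hb, Matrix.updateCol_ne this]

theorem Matrix.submatrix_updateCol_of_notMem_range (hj : ∀ b, c b ≠ j) :
    (A.updateCol j v).submatrix r c = A.submatrix r c := by
  ext a b
  simp [Matrix.updateCol_ne (hj b)]

end Submatrix

theorem StrictMono.update_of_covBy {κ β : Type*} [LinearOrder κ] [DecidableEq κ] [LinearOrder β]
    {c : κ → β} (hc : StrictMono c) {p : κ} {j : β} (hj : ∀ b, c b ≠ j)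
    (hadj : j ⋖ c p ∨ c p ⋖ j) : StrictMono (Function.update c p j) := by
  have below : ∀ b, c b < c p → c b < j := fun b hb =>
    hadj.elim (fun h => (h.le_of_lt hb).lt_of_ne (hj b)) (fun h => hb.trans h.lt)
  have above : ∀ b, c p < c b → j < c b := fun b hb =>
    hadj.elim (fun h => h.lt.trans hb) (fun h => (h.ge_of_gt hb).lt_of_ne (hj b).symm)
  intro a b hab
  rcases eq_or_ne a p with rfl | ha
  · simpa [Function.update_of_ne hab.ne'] using above b (hc hab)
  rcases eq_or_ne b p with rfl | hb
  · simpa [Function.update_of_ne ha] using below a (hc hab)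
  · simpa [Function.update_of_ne ha, Function.update_of_ne hb] using hc hab

section TropPermSup

variable {k : ℕ} (ε : ℤˣ) (B : Matrix (Fin k) (Fin k) (WithBot ℝ)) (p : Fin k)

theorem tropPermSup_updateCol_sup (v w : Fin k → WithBot ℝ) :
    tropPermSup k ε (B.updateCol p (v ⊔ w))
      = tropPermSup k ε (B.updateCol p v) ⊔ tropPermSup k ε (B.updateCol p w) := by
  simp only [tropPermSup, ← sup_sup]
  refine sup_congr rfl fun σ _ => ?_
  simp only [Pi.sup_apply, sum_updateCol_apply_perm]
  exact (max_add_add_right _ _ _).symm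

theorem tropPermSup_updateCol_add (s : ℝ) :
    tropPermSup k ε (B.updateCol p fun a => B a p + s) = tropPermSup k ε B + s := by
  unfold tropPermSup
  rw [apply_sup_eq_sup_comp_of_linearOrder (· + (s : WithBot ℝ))
    (fun _ _ h => add_le_add_left h _) (WithBot.bot_add _)]
  refine sup_congr rfl fun σ _ => ?_
  conv_rhs => rw [← B.updateCol_eq_self p]
  simp only [Function.comp_apply, sum_updateCol_apply_perm, add_right_comm]

theorem tropPermSup_le_neg_of_col_eq_add {q : Fin k} (hqp : q ≠ p) (s : ℝ)
    (hcol : ∀ a, B a p = B a q + s) : tropPermSup k ε B ≤ tropPermSup k (-ε) B := by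
  -- `B a b = B a (g b) + t b`: the first term is invariant under `swap q p` on columns, and the
  -- second contributes the same constant `s` to the weight of every permutation.
  set g : Fin k → Fin k := Function.update id p q
  set t : Fin k → WithBot ℝ := Pi.single p (s : WithBot ℝ)
  have hB : ∀ a b, B a b = B a (g b) + t b := by
    intro a b
    rcases eq_or_ne b p with rfl | hb
    · simp [g, t, hcol]
    · simp [g, t, hb]
  have weight : ∀ π : Equiv.Perm (Fin k), ∑ i, B i (π i) = ∑ i, B i (g (π i)) + ∑ b, t b := by
    intro π
    rw [sum_congr rfl fun i _ => hB i (π i), sum_add_distrib, Equiv.sum_comp π t]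
  have hg : ∀ b, g (Equiv.swap q p b) = g b := by
    intro b
    rcases eq_or_ne b q with rfl | hbq
    · simp [g, hqp]
    rcases eq_or_ne b p with rfl | hbp
    · simp [g, hqp]
    · rw [Equiv.swap_apply_of_ne_of_ne hbq hbp]
  refine Finset.sup_le fun σ hσ => ?_
  have hτ : Equiv.swap q p * σ ∈ univ.filter fun τ : Equiv.Perm (Fin k) => τ.sign = -ε := by
    simpa [Equiv.Perm.sign_swap hqp] using (mem_filter.1 hσ).2
  refine le_of_eq_of_le ?_ (le_sup (f := fun τ : Equiv.Perm (Fin k) => ∑ i, B i (τ i)) hτ)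
  rw [weight σ, weight (Equiv.swap q p * σ)]
  simp only [Equiv.Perm.mul_apply, hg]

end TropPermSup

section ElementaryJacobi

variable {n : ℕ} (A : Matrix (Fin n) (Fin n) (WithBot ℝ))

theorem tropMul_eq_updateCol_sup_add {M : Matrix (Fin n) (Fin n) (WithBot ℝ)} {j₁ j₂ : Fin n}
    (hj : j₁ ≠ j₂) (s : ℝ)
    (hM : ∀ a b, M a b = if a = b then 0 else if a = j₁ ∧ b = j₂ then (s : WithBot ℝ) else ⊥) :
    tropMul A M = A.updateCol j₂ fun a => A a j₂ ⊔ (A a j₁ + s) := by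
  ext a b
  simp only [tropMul, Matrix.updateCol_apply]
  apply le_antisymm
  · refine Finset.sup_le fun c _ => ?_
    rw [hM]
    split_ifs <;> simp_all
  · split_ifs with hb
    · subst hb
      exact sup_le (le_sup_of_le (mem_univ b) (by simp [hM]))
        (le_sup_of_le (mem_univ j₁) (by simp [hM, hj]))
    · exact le_sup_of_le (mem_univ b) (by simp [hM])

theorem tropMul_xUp {i : ℕ} (hi : i + 1 < n) (s : ℝ) :
    tropMul A (xUp n i s)
      = A.updateCol ⟨i + 1, hi⟩ fun a => A a ⟨i + 1, hi⟩ ⊔ (A a ⟨i, by omega⟩ + s) :=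
  tropMul_eq_updateCol_sup_add A (by simp [Fin.ext_iff]) s fun a b => by simp [xUp, Fin.ext_iff]

theorem tropMul_xLow {i : ℕ} (hi : i + 1 < n) (s : ℝ) :
    tropMul A (xLow n i s)
      = A.updateCol ⟨i, by omega⟩ fun a => A a ⟨i, by omega⟩ ⊔ (A a ⟨i + 1, hi⟩ + s) :=
  tropMul_eq_updateCol_sup_add A (by simp [Fin.ext_iff]) s fun a b => by simp [xLow, Fin.ext_iff]

theorem tropMul_xDiag {i : ℕ} (hi : i < n) (s : ℝ) :
    tropMul A (xDiag n i s) = A.updateCol ⟨i, hi⟩ fun a => A a ⟨i, hi⟩ + s := by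
  ext a b
  simp only [tropMul, Matrix.updateCol_apply]
  apply le_antisymm
  · refine Finset.sup_le fun c _ => ?_
    rcases eq_or_ne c b with rfl | hcb
    · by_cases hc : c = ⟨i, hi⟩
      · subst hc; simp [xDiag]
      · simp [xDiag, hc, Fin.val_ne_of_ne hc]
    · simp [xDiag, hcb]
  · refine le_sup_of_le (mem_univ b) ?_
    by_cases hb : b = ⟨i, hi⟩
    · subst hb; simp [xDiag]
    · simp [xDiag, hb, Fin.val_ne_of_ne hb]

end ElementaryJacobi

theorem tropId_isTropTN (n : ℕ) : IsTropTN n (tropId n) := by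
  intro k r c hr hc
  refine le_of_eq_of_le (le_bot_iff.1 (Finset.sup_le fun σ hσ => ?_)) bot_le
  refine le_of_eq (WithBot.sum_eq_bot_iff.2 ?_)
  by_contra! hfinite
  have hmatch : ∀ i, r i = c (σ i) := fun i => by
    by_contra h
    exact hfinite i (mem_univ i) (by simp [tropId, h])
  have hσ_mono : StrictMono σ := fun a b hab =>
    hc.lt_iff_lt.1 (by rw [← hmatch, ← hmatch]; exact hr hab)
  have hσ_one : σ = 1 := Equiv.ext (congrFun ((hσ_mono.range_inj strictMono_id).1 (by simp)))
  simp [hσ_one] at hσ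

def IsTropJacobi (n : ℕ) (M : Matrix (Fin n) (Fin n) (WithBot ℝ)) : Prop :=
  ∃ s : ℝ, (∃ i : ℕ, i + 1 < n ∧ (M = xUp n i s ∨ M = xLow n i s)) ∨
    (∃ i : ℕ, i < n ∧ M = xDiag n i s)

namespace IsTropTN

variable {n : ℕ} {A : Matrix (Fin n) (Fin n) (WithBot ℝ)}

theorem updateCol_add (hA : IsTropTN n A) (j : Fin n) (s : ℝ) :
    IsTropTN n (A.updateCol j fun a => A a j + s) := by
  intro k r c hr hc
  by_cases hj : ∃ p, c p = j
  · obtain ⟨p, rfl⟩ := hj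
    have hsub : (A.updateCol (c p) fun a => A a (c p) + s).submatrix r c
        = (A.submatrix r c).updateCol p fun a => A.submatrix r c a p + s :=
      Matrix.submatrix_updateCol_of_apply_eq _ _ _ hc.injective rfl
    rw [hsub, tropPermSup_updateCol_add, tropPermSup_updateCol_add]
    exact add_le_add_left (hA k r c hr hc) _
  · push Not at hj
    rw [Matrix.submatrix_updateCol_of_notMem_range _ _ _ hj]
    exact hA k r c hr hc

theorem updateCol_sup_add (hA : IsTropTN n A) {j₁ j₂ : Fin n} (hadj : j₁ ⋖ j₂ ∨ j₂ ⋖ j₁)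
    (s : ℝ) : IsTropTN n (A.updateCol j₂ fun a => A a j₂ ⊔ (A a j₁ + s)) := by
  intro k r c hr hc
  by_cases hj₂ : ∃ p, c p = j₂
  · obtain ⟨p, rfl⟩ := hj₂
    set B := A.submatrix r c
    set w : Fin k → WithBot ℝ := fun a => A (r a) j₁ + s
    have hsub : (A.updateCol (c p) fun a => A a (c p) ⊔ (A a j₁ + s)).submatrix r c
        = B.updateCol p ((fun a => B a p) ⊔ w) :=
      Matrix.submatrix_updateCol_of_apply_eq _ _ _ hc.injective rfl
    rw [hsub, tropPermSup_updateCol_sup, tropPermSup_updateCol_sup, B.updateCol_eq_self]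
    refine sup_le_sup (hA k r c hr hc) ?_
    by_cases hj₁ : ∃ q, c q = j₁
    · obtain ⟨q, rfl⟩ := hj₁
      have hqp : q ≠ p := by
        rintro rfl
        exact hadj.elim (fun h => h.lt.ne rfl) (fun h => h.lt.ne rfl)
      simpa using tropPermSup_le_neg_of_col_eq_add (-1) (B.updateCol p w) p hqp s
        (fun a => by simp [hqp, w, B])
    · push Not at hj₁
      set B' := A.submatrix r (Function.update c p j₁)
      have hw : B.updateCol p w = B'.updateCol p fun a => B' a p + s := by
        ext a b
        by_cases hb : b = p <;> simp [hb, B, B', w]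
      rw [hw, tropPermSup_updateCol_add, tropPermSup_updateCol_add]
      exact add_le_add_left (hA k r _ hr (hc.update_of_covBy hj₁ hadj)) _
  · push Not at hj₂
    rw [Matrix.submatrix_updateCol_of_notMem_range _ _ _ hj₂]
    exact hA k r c hr hc

theorem tropMul_of_isTropJacobi (hA : IsTropTN n A) {M : Matrix (Fin n) (Fin n) (WithBot ℝ)}
    (hM : IsTropJacobi n M) : IsTropTN n (tropMul A M) := by
  obtain ⟨s, ⟨i, hi, rfl | rfl⟩ | ⟨i, hi, rfl⟩⟩ := hM
  · rw [tropMul_xUp A hi]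
    exact hA.updateCol_sup_add (Or.inl (by simp [Fin.covBy_iff])) s
  · rw [tropMul_xLow A hi]
    exact hA.updateCol_sup_add (Or.inr (by simp [Fin.covBy_iff])) s
  · rw [tropMul_xDiag A hi]
    exact hA.updateCol_add _ s

theorem foldl_tropMul (hA : IsTropTN n A) {L : List (Matrix (Fin n) (Fin n) (WithBot ℝ))}
    (hL : ∀ M ∈ L, IsTropJacobi n M) : IsTropTN n (L.foldl tropMul A) := by
  induction L generalizing A with
  | nil => exact hA
  | cons M L ih =>
    exact ih (hA.tropMul_of_isTropJacobi (hL M List.mem_cons_self))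
      fun M' hM' => hL M' (List.mem_cons_of_mem _ hM')

end IsTropTN

/-- any max-plus product of tropical elementary Jacobi matrices
with real parameters is tropical totally nonnegative. -/
theorem jacobi_product_TN (n : ℕ) (L : List (Matrix (Fin n) (Fin n) (WithBot ℝ)))
    (hL : ∀ M ∈ L, ∃ s : ℝ,
      (∃ i : ℕ, i + 1 < n ∧ (M = xUp n i s ∨ M = xLow n i s)) ∨
      (∃ i : ℕ, i < n ∧ M = xDiag n i s)) :
    IsTropTN n (L.foldl tropMul (tropId n)) :=
  (tropId_isTropTN n).foldl_tropMul hL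
end

section
/- An n×n real matrix A is tropical totally positive (A ∈ TPtrop) if and only if A_{i,j} + A_{i−1,j−1} > A_{i−1,j} + A_{i,j−1} for all 2 ≤ i, j ≤ n, i.e., tropical total positivity is characterized by the strict tropical positivity of the 2×2 minors on consecutive rows and columns. -/
open Finset

private lemma fin2_mono {n : ℕ} {a b : Fin n} (hab : a < b) :
    StrictMono ![a, b] := by
  intro x y hxy
  fin_cases x <;> fin_cases y <;> simp_all

private lemma supermod {n : ℕ} {A : Matrix (Fin n) (Fin n) ℝ}
    (h : ∀ i j : Fin n, 0 < i.val → 0 < j.val →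
        A (fpred i) j + A i (fpred j) < A i j + A (fpred i) (fpred j)) :
    ∀ (a b c d : ℕ) (hb : b < n) (hd : d < n) (hab : a < b) (hcd : c < d),
      A ⟨a, hab.trans hb⟩ ⟨d, hd⟩ + A ⟨b, hb⟩ ⟨c, hcd.trans hd⟩ <
      A ⟨a, hab.trans hb⟩ ⟨c, hcd.trans hd⟩ + A ⟨b, hb⟩ ⟨d, hd⟩ := by
  have base : ∀ (a c : ℕ) (ha : a + 1 < n) (hc : c + 1 < n),
      A ⟨a, by omega⟩ ⟨c+1, hc⟩ + A ⟨a+1, ha⟩ ⟨c, by omega⟩ <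
      A ⟨a+1, ha⟩ ⟨c+1, hc⟩ + A ⟨a, by omega⟩ ⟨c, by omega⟩ := by
    intro a c ha hc
    have := h ⟨a+1, ha⟩ ⟨c+1, hc⟩ (by simp) (by simp)
    simp only [fpred, Nat.add_sub_cancel] at this
    exact this
  have step1 : ∀ (c : ℕ) (hc : c + 1 < n) (a b : ℕ) (hab : a < b) (hb : b < n),
      A ⟨a, by omega⟩ ⟨c+1, hc⟩ + A ⟨b, hb⟩ ⟨c, by omega⟩ <
      A ⟨a, by omega⟩ ⟨c, by omega⟩ + A ⟨b, hb⟩ ⟨c+1, hc⟩ := by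
    intro c hc a b hab
    induction b, hab using Nat.le_induction with
    | base =>
      intro hb
      have := base a c hb hc
      linarith
    | succ b hab ih =>
      intro hb
      have h1 := ih (by omega)
      have h2 := base b c hb hc
      linarith
  intro a b c d hb hd hab hcd
  induction d, hcd using Nat.le_induction with
  | base =>
    have := step1 c hd a b hab hb
    linarith
  | succ d hcd ih =>
    have h1 := ih (by omega)
    have h2 := step1 d hd a b hab hb
    linarith

private lemma cast_perm_sum {n k : ℕ} (A : Matrix (Fin n) (Fin n) ℝ)
    (r c : Fin k → Fin n) (σ : Equiv.Perm (Fin k)) :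
    (∑ x, ((A.map ((↑) : ℝ → WithBot ℝ)).submatrix r c) x (σ x))
      = ((∑ x, A (r x) (c (σ x)) : ℝ) : WithBot ℝ) := by
  have h : ((∑ x, A (r x) (c (σ x)) : ℝ) : WithBot ℝ)
      = ∑ x, ((A (r x) (c (σ x)) : ℝ) : WithBot ℝ) := by exact_mod_cast rfl
  rw [h]
  rfl


private lemma perm_sum_lt {k : ℕ} {B : Matrix (Fin k) (Fin k) ℝ}
    (hB : ∀ p q u v : Fin k, p < q → u < v → B p v + B q u < B p u + B q v) :
    ∀ σ : Equiv.Perm (Fin k), σ ≠ 1 → ∑ x, B x (σ x) < ∑ x, B x x := by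
  suffices main : ∀ m : ℕ, ∀ σ : Equiv.Perm (Fin k),
      (Finset.univ.filter fun x => σ x ≠ x).card ≤ m → σ ≠ 1 →
      ∑ x, B x (σ x) < ∑ x, B x x by
    intro σ hσ; exact main _ σ le_rfl hσ
  intro m
  induction m with
  | zero =>
    intro σ hcard hσ
    exfalso
    apply hσ
    ext x
    have hempty := Finset.card_eq_zero.mp (Nat.le_zero.mp hcard)
    have := Finset.filter_eq_empty_iff.mp hempty (Finset.mem_univ x)
    exact congrArg _ (not_not.mp this)
  | succ m ih =>
    intro σ hcard hσ
    set s := Finset.univ.filter fun x => σ x ≠ x with hs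
    have hsne : s.Nonempty := by
      by_contra hne
      apply hσ
      ext x
      have := Finset.not_nonempty_iff_eq_empty.mp hne
      have := Finset.filter_eq_empty_iff.mp this (Finset.mem_univ x)
      exact congrArg _ (not_not.mp this)
    set i := s.min' hsne with hi
    have his : i ∈ s := s.min'_mem hsne
    have hiσ : σ i ≠ i := by simpa [hs] using (Finset.mem_filter.mp his).2
    have hlt : ∀ x : Fin k, x < i → σ x = x := by
      intro x hx
      by_contra hne
      exact absurd (s.min'_le x (by simp [hs, hne])) (not_le.mpr hx)
    have hσi : i < σ i := by
      rcases lt_or_ge i (σ i) with h | h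
      · exact h
      · exfalso
        have h' : σ i < i := lt_of_le_of_ne h hiσ
        have := hlt (σ i) h'
        exact hiσ (σ.injective this)
    set j := σ.symm i with hj
    have hji : σ j = i := σ.apply_symm_apply i
    have hjne : j ≠ i := by
      intro hji'
      rw [hji'] at hji
      exact hiσ hji
    have hij : i < j := by
      rcases lt_or_ge i j with h | h
      · exact h
      · exfalso
        have h' : j < i := lt_of_le_of_ne h hjne
        have := hlt j h'
        rw [this] at hji
        exact hjne hji
    set σ' := σ * Equiv.swap i j with hσ'
    have e1 : σ' i = i := by
      simp [hσ', Equiv.Perm.mul_apply, Equiv.swap_apply_left, hji]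
    have e2 : σ' j = σ i := by
      simp [hσ', Equiv.Perm.mul_apply, Equiv.swap_apply_right]
    have e3 : ∀ x, x ≠ i → x ≠ j → σ' x = σ x := by
      intro x h1 h2
      simp [hσ', Equiv.Perm.mul_apply, Equiv.swap_apply_of_ne_of_ne h1 h2]
    -- sum splitting
    have hjmem : j ∈ Finset.univ.erase i := by simp [hjne]
    have hsplit : ∀ f : Fin k → ℝ,
        ∑ x, f x = ∑ x ∈ (Finset.univ.erase i).erase j, f x + f j + f i := by
      intro f
      rw [Finset.sum_erase_add _ _ hjmem, Finset.sum_erase_add _ _ (Finset.mem_univ i)]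
    have hcongr : ∑ x ∈ (Finset.univ.erase i).erase j, B x (σ' x)
        = ∑ x ∈ (Finset.univ.erase i).erase j, B x (σ x) := by
      apply Finset.sum_congr rfl
      intro x hx
      rw [e3 x (Finset.mem_erase.mp (Finset.mem_erase.mp hx).2).1 (Finset.mem_erase.mp hx).1]
    have key : B i (σ i) + B j (σ j) < B i (σ' i) + B j (σ' j) := by
      rw [e1, e2, hji]
      exact hB i j i (σ i) hij hσi
    have hsum : ∑ x, B x (σ x) < ∑ x, B x (σ' x) := by
      rw [hsplit (fun x => B x (σ x)), hsplit (fun x => B x (σ' x)), hcongr]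
      linarith
    -- support decreases
    have hsub : (Finset.univ.filter fun x => σ' x ≠ x) ⊆ s.erase i := by
      intro x hx
      have hx' : σ' x ≠ x := by simpa using (Finset.mem_filter.mp hx).2
      have hxi : x ≠ i := by
        intro h; rw [h] at hx'; exact hx' e1
      rcases eq_or_ne x j with h | h
      · subst h
        exact Finset.mem_erase.mpr ⟨hxi, by simp [hs]; intro hc; exact hjne (hc ▸ hji ▸ hc ▸ rfl)⟩
      · refine Finset.mem_erase.mpr ⟨hxi, ?_⟩
        simp only [hs, Finset.mem_filter, Finset.mem_univ, true_and]
        rw [← e3 x hxi h]; exact hx'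
    have hcard' : (Finset.univ.filter fun x => σ' x ≠ x).card ≤ m := by
      have h1 := Finset.card_le_card hsub
      have h2 := Finset.card_erase_of_mem his
      have h3 : 1 ≤ s.card := Finset.card_pos.mpr ⟨i, his⟩
      omega
    rcases eq_or_ne σ' 1 with h1 | h1
    · rw [h1] at hsum
      simpa using hsum
    · exact lt_trans hsum (ih σ' hcard' h1)

/-- a real matrix is tropical totally positive iff all its 2×2
minors on consecutive rows and columns are strictly tropically positive. -/
theorem TP_iff_consecutive_minors (n : ℕ) (A : Matrix (Fin n) (Fin n) ℝ) :
    IsTropTP n A ↔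
      ∀ i j : Fin n, 0 < i.val → 0 < j.val →
        A (fpred i) j + A i (fpred j) < A i j + A (fpred i) (fpred j) := by
  constructor
  · intro hTP i j hi hj
    have hri : fpred i < i := by
      rw [Fin.lt_def]; simp only [fpred]; omega
    have hcj : fpred j < j := by
      rw [Fin.lt_def]; simp only [fpred]; omega
    have h2 := hTP 2 le_rfl ![fpred i, i] ![fpred j, j] (fin2_mono hri) (fin2_mono hcj)
    rw [tropPermSup, tropPermSup,
      show (Finset.univ.filter fun σ : Equiv.Perm (Fin 2) =>
        Equiv.Perm.sign σ = (1 : ℤˣ)) = {1} from by decide,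
      show (Finset.univ.filter fun σ : Equiv.Perm (Fin 2) =>
        Equiv.Perm.sign σ = (-1 : ℤˣ)) = {Equiv.swap 0 1} from by decide,
      Finset.sup_singleton, Finset.sup_singleton, cast_perm_sum, cast_perm_sum,
      WithBot.coe_lt_coe] at h2
    simp only [Fin.sum_univ_two, Equiv.swap_apply_left, Equiv.swap_apply_right,
      Equiv.Perm.one_apply, Matrix.cons_val_zero, Matrix.cons_val_one,
      Matrix.head_cons] at h2
    linarith
  · intro h k hk r c hr hc
    have hB : ∀ p q u v : Fin k, p < q → u < v →
        A (r p) (c v) + A (r q) (c u) < A (r p) (c u) + A (r q) (c v) := by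
      intro p q u v hpq huv
      have := supermod h (r p).val (r q).val (c u).val (c v).val
        (r q).isLt (c v).isLt (hr hpq) (hc huv)
      simpa using this
    simp only [tropPermSup]
    refine lt_of_lt_of_le (b := ((∑ x, A (r x) (c x) : ℝ) : WithBot ℝ)) ?_ ?_
    · refine (Finset.sup_lt_iff (WithBot.bot_lt_coe _)).mpr ?_
      intro σ hσ
      rw [cast_perm_sum, WithBot.coe_lt_coe]
      have hsgn : Equiv.Perm.sign σ = -1 := (Finset.mem_filter.mp hσ).2
      have hone : σ ≠ 1 := by
        rintro rfl
        rw [Equiv.Perm.sign_one] at hsgn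
        exact absurd hsgn (by decide)
      exact perm_sum_lt (B := fun p q => A (r p) (c q)) hB σ hone
    · have hmem : (1 : Equiv.Perm (Fin k)) ∈ Finset.univ.filter
          fun σ : Equiv.Perm (Fin k) => Equiv.Perm.sign σ = (1 : ℤˣ) := by simp
      have hle := Finset.le_sup (f := fun σ : Equiv.Perm (Fin k) =>
        ∑ x, ((A.map ((↑) : ℝ → WithBot ℝ)).submatrix r c) x (σ x)) hmem
      have hcast := cast_perm_sum A r c 1
      simp only [Equiv.Perm.one_apply] at hle hcast
      rw [hcast] at hle
      exact hle
end

section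
/- Let m ≥ 1 and s < m, and let F be an m×m matrix over ℝ ∪ {−∞} that factors as a max-plus product F = G ⊙ H with G an m×s matrix and H an s×m matrix over ℝ ∪ {−∞}. Then F is tropically sign-singular: the maximum over even permutations σ ∈ S_m of Σ_i F_{i,σ(i)} equals the maximum over odd permutations σ ∈ S_m of Σ_i F_{i,σ(i)} (both computed in WithBot ℝ; in particular, either the tropical permanent of F is −∞, or it is attained by permutations of both parities). -/
open Finset

lemma aux_sum_eq_bot {ι : Type*} (t : Finset ι) (g : ι → WithBot ℝ) {i : ι}
    (hi : i ∈ t) (h : g i = ⊥) : ∑ x ∈ t, g x = ⊥ := by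
  classical
  rw [← Finset.add_sum_erase t g hi, h]
  exact WithBot.bot_add _

lemma aux_trop_le (m s : ℕ) (hs : s < m)
    (G : Matrix (Fin m) (Fin s) (WithBot ℝ))
    (H : Matrix (Fin s) (Fin m) (WithBot ℝ)) (ε : ℤˣ) :
    tropPermSup m ε (tropMul G H) ≤ tropPermSup m (-ε) (tropMul G H) := by
  classical
  apply Finset.sup_le
  intro σ hσ
  rw [Finset.mem_filter] at hσ
  by_cases hb : ∃ i, tropMul G H i (σ i) = ⊥
  · obtain ⟨i, hi⟩ := hb
    rw [aux_sum_eq_bot Finset.univ _ (Finset.mem_univ i) hi]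
    exact bot_le
  push_neg at hb
  have hs0 : 0 < s := by
    by_contra h
    have hz : s = 0 := by omega
    subst hz
    have h1 := hb ⟨0, by omega⟩
    simp [tropMul] at h1
  haveI : Nonempty (Fin s) := ⟨⟨0, hs0⟩⟩
  have hch : ∀ i : Fin m, ∃ k : Fin s,
      tropMul G H i (σ i) = G i k + H k (σ i) := by
    intro i
    obtain ⟨k, _, hk⟩ := Finset.exists_mem_eq_sup Finset.univ
      Finset.univ_nonempty (fun k : Fin s => G i k + H k (σ i))
    exact ⟨k, hk⟩
  choose f hf using hch
  have hninj : ¬ Function.Injective f := by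
    intro h
    have := Fintype.card_le_of_injective f h
    simp only [Fintype.card_fin] at this
    omega
  rw [Function.not_injective_iff] at hninj
  obtain ⟨i, j, hfij, hij⟩ := hninj
  set τ := σ * Equiv.swap i j with hτ
  have hsign : Equiv.Perm.sign τ = -ε := by
    rw [hτ, Equiv.Perm.sign_mul, Equiv.Perm.sign_swap hij, hσ.2, mul_neg_one]
  have hfs : ∀ k, f (Equiv.swap i j k) = f k := by
    intro k
    rcases eq_or_ne k i with rfl | hki
    · rw [Equiv.swap_apply_left, hfij]
    rcases eq_or_ne k j with rfl | hkj
    · rw [Equiv.swap_apply_right, hfij]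
    · rw [Equiv.swap_apply_of_ne_of_ne hki hkj]
  have key : ∑ k, tropMul G H k (σ k) = ∑ k, (G k (f k) + H (f k) (τ k)) := by
    calc ∑ k, tropMul G H k (σ k)
        = ∑ k, (G k (f k) + H (f k) (σ k)) :=
          Finset.sum_congr rfl (fun k _ => hf k)
      _ = ∑ k, G k (f k) + ∑ k, H (f k) (σ k) := Finset.sum_add_distrib
      _ = ∑ k, G k (f k) + ∑ k, H (f k) (τ k) := by
          congr 1
          rw [← Equiv.sum_comp (Equiv.swap i j) (fun k => H (f k) (σ k))]
          refine Finset.sum_congr rfl fun k _ => ?_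
          simp only [hfs k]
          rfl
      _ = ∑ k, (G k (f k) + H (f k) (τ k)) := Finset.sum_add_distrib.symm
  have hle : ∑ k, tropMul G H k (σ k) ≤ ∑ k, tropMul G H k (τ k) := by
    rw [key]
    refine Finset.sum_le_sum fun k _ => ?_
    exact Finset.le_sup (f := fun t => G k t + H t (τ k)) (Finset.mem_univ (f k))
  refine hle.trans ?_
  exact Finset.le_sup (f := fun σ : Equiv.Perm (Fin m) => ∑ i, tropMul G H i (σ i))
    (Finset.mem_filter.mpr ⟨Finset.mem_univ τ, hsign⟩)

/-- a square max-plus matrix which factors through a smaller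
dimension is tropically sign-singular. -/
theorem trop_factorization_sign_singular (m s : ℕ) (hm : 1 ≤ m) (hs : s < m)
    (F : Matrix (Fin m) (Fin m) (WithBot ℝ))
    (G : Matrix (Fin m) (Fin s) (WithBot ℝ))
    (H : Matrix (Fin s) (Fin m) (WithBot ℝ))
    (hF : F = tropMul G H) :
    tropPermSup m 1 F = tropPermSup m (-1) F := by
  subst hF
  refine le_antisymm (aux_trop_le m s hs G H 1) ?_
  have h := aux_trop_le m s hs G H (-1)
  rwa [neg_neg] at h
end
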